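/- arXiv:1304.4343 — 6 statements merged into one kernel-verified Lean document; each statement's English description precedes it below -/
import Mathlib

section
/- Let q ≥ 2 and let P_k be the polynomials defined by P_0 = 1, P_1 = X, P_{k+1}(X) = ((q+1) X P_k(X) − P_{k−1}(X))/q for k ≥ 1. Then for every β ∈ (0,1) there exist constants C > 0 and β' > 0, depending only on q and β, such that for every real λ ∈ [−1+β, 1−β] and every integer k ≥ 0, |P_k(λ)| ≤ C q^{−β' k}. -/
noncomputable section

/-- The polynomials `P_0 = 1`, `P_1 = X`, `P_{k+2} = ((q+1) X P_{k+1} - P_k)/q`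
(whose values at eigenvalues of the normalized adjacency operator are the eigenvalues of the
distance-`k` averaging operators `S_k`). -/
def sphPR (q : ℕ) : ℕ → ℝ → ℝ
  | 0, _ => 1
  | 1, x => x
  | (k + 2), x => (((q : ℝ) + 1) * x * sphPR q (k + 1) x - sphPR q k x) / q

/-- Auxiliary sequence `h_0 = 1`, `h_{k+1} = μ h_k + ν^{k+1}` (so that
`h_k = ∑_{i+j=k} μ^i ν^j`). -/
def hseqAux (μ ν : ℂ) : ℕ → ℂ
  | 0 => 1
  | (k+1) => μ * hseqAux μ ν k + ν^(k+1)

lemma hseqAux_rec (μ ν : ℂ) (k : ℕ) :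
    hseqAux μ ν (k+2) = (μ + ν) * hseqAux μ ν (k+1) - μ*ν * hseqAux μ ν k := by
  show μ * (μ * hseqAux μ ν k + ν^(k+1)) + ν^(k+2)
      = (μ + ν) * (μ * hseqAux μ ν k + ν^(k+1)) - μ*ν * hseqAux μ ν k
  ring

lemma hseqAux_bound (μ ν : ℂ) (r : ℝ) (hr : 0 ≤ r) (hμ : ‖μ‖ ≤ r)
    (hν : ‖ν‖ ≤ r) (k : ℕ) :
    ‖hseqAux μ ν k‖ ≤ (k+1) * r^k := by
  induction k with
  | zero => simp [hseqAux]
  | succ n ih =>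
    have h1 : ‖hseqAux μ ν (n+1)‖ ≤
        ‖μ‖ * ‖hseqAux μ ν n‖ + ‖ν‖ ^ (n+1) := by
      calc ‖hseqAux μ ν (n+1)‖
          = ‖μ * hseqAux μ ν n + ν^(n+1)‖ := rfl
        _ ≤ ‖μ * hseqAux μ ν n‖ + ‖ν^(n+1)‖ := norm_add_le _ _
        _ = ‖μ‖ * ‖hseqAux μ ν n‖ + ‖ν‖ ^ (n+1) := by
            rw [norm_mul, norm_pow]
    have h2 : ‖μ‖ * ‖hseqAux μ ν n‖ ≤ r * ((n+1) * r^n) :=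
      mul_le_mul hμ ih (norm_nonneg _) hr
    have h3 : ‖ν‖ ^ (n+1) ≤ r^(n+1) :=
      pow_le_pow_left₀ (norm_nonneg _) hν _
    have h4 : ((n:ℝ)+1+1) * r^(n+1) = r * ((n+1) * r^n) + r^(n+1) := by ring
    push_cast
    push_cast at ih h2
    rw [h4]
    linarith

lemma sph_root_bound (q : ℕ) (hq : 2 ≤ q) (β lam x : ℝ) (hβ0 : 0 < β)
    (hlam : |lam| ≤ 1 - β)
    (hroot : (q:ℝ) * x^2 - ((q:ℝ)+1) * lam * x + 1 = 0) :
    |x| ≤ max (Real.sqrt (q:ℝ)⁻¹) (1 - β) := by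
  have hq1 : (1:ℝ) ≤ (q:ℝ) := by exact_mod_cast Nat.one_le_of_lt hq
  have hq0 : (0:ℝ) < (q:ℝ) := by linarith
  set u := |x| with hu
  have hu0 : 0 ≤ u := abs_nonneg x
  have key : (q:ℝ) * u^2 + 1 ≤ ((q:ℝ)+1) * (1-β) * u := by
    have h1 : (q:ℝ) * x^2 + 1 = ((q:ℝ)+1) * lam * x := by linarith
    have h2 : ((q:ℝ)+1) * lam * x ≤ ((q:ℝ)+1) * (|lam| * u) := by
      have := abs_mul lam x
      have h3 : lam * x ≤ |lam * x| := le_abs_self _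
      nlinarith [abs_nonneg lam]
    have h4 : |lam| * u ≤ (1-β) * u := mul_le_mul_of_nonneg_right hlam hu0
    have hx2 : x^2 = u^2 := (sq_abs x).symm
    nlinarith
  by_cases hcase : (q:ℝ) * u ≤ 1
  · have h5 : u ≤ (q:ℝ)⁻¹ := by
      rw [inv_eq_one_div, le_div_iff₀ hq0]; linarith
    have h6 : (q:ℝ)⁻¹ ≤ Real.sqrt (q:ℝ)⁻¹ := by
      have h7 : (q:ℝ)⁻¹ = Real.sqrt (((q:ℝ)⁻¹)^2) := (Real.sqrt_sq (by positivity)).symm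
      rw [h7]
      apply Real.sqrt_le_sqrt
      nlinarith [inv_pos.mpr hq0, inv_le_one_of_one_le₀ hq1]
    exact le_max_of_le_left (le_trans h5 h6)
  · push_neg at hcase
    have h1u : 1 - u > 0 := by nlinarith
    have : u ≤ 1 - β := by nlinarith
    exact le_max_of_le_right this

lemma sph_exists_mu_nu (q : ℕ) (hq : 2 ≤ q) (β lam : ℝ) (hβ0 : 0 < β)
    (hlam : |lam| ≤ 1 - β) :
    ∃ μ ν : ℂ, μ + ν = ((((q:ℝ)+1) * lam / q : ℝ) : ℂ) ∧ μ * ν = (((q:ℝ)⁻¹ : ℝ) : ℂ) ∧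
      ‖μ‖ ≤ max (Real.sqrt (q:ℝ)⁻¹) (1 - β) ∧
      ‖ν‖ ≤ max (Real.sqrt (q:ℝ)⁻¹) (1 - β) := by
  have hroot_bound : ∀ x : ℝ, (q:ℝ) * x^2 - ((q:ℝ)+1) * lam * x + 1 = 0 →
      |x| ≤ max (Real.sqrt (q:ℝ)⁻¹) (1 - β) :=
    fun x hx => sph_root_bound q hq β lam x hβ0 hlam hx
  have hq0 : (0:ℝ) < (q:ℝ) := by positivity
  have hqne : (q:ℝ) ≠ 0 := ne_of_gt hq0
  set A : ℝ := ((q:ℝ)+1) * lam with hA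
  set D : ℝ := A^2 - 4*q with hD
  by_cases hDpos : 0 ≤ D
  · set s : ℝ := Real.sqrt D with hs
    have hss : s^2 = D := Real.sq_sqrt hDpos
    have hss' : s^2 = ((q:ℝ)+1)^2*lam^2 - 4*q := by rw [hss, hD, hA]; ring
    set x₁ : ℝ := (A + s)/(2*q) with hx1
    set x₂ : ℝ := (A - s)/(2*q) with hx2
    have hr1 : (q:ℝ) * x₁^2 - ((q:ℝ)+1) * lam * x₁ + 1 = 0 := by
      rw [hx1]; field_simp; linear_combination hss'
    have hr2 : (q:ℝ) * x₂^2 - ((q:ℝ)+1) * lam * x₂ + 1 = 0 := by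
      rw [hx2]; field_simp; linear_combination hss'
    refine ⟨(x₁:ℂ), (x₂:ℂ), ?_, ?_, ?_, ?_⟩
    · rw [← Complex.ofReal_add]
      norm_cast
      rw [hx1, hx2]; field_simp; ring
    · rw [← Complex.ofReal_mul]
      norm_cast
      rw [hx1, hx2]; field_simp; linear_combination (-1:ℝ) * hss'
    · rw [Complex.norm_real, Real.norm_eq_abs]; exact hroot_bound x₁ hr1
    · rw [Complex.norm_real, Real.norm_eq_abs]; exact hroot_bound x₂ hr2
  · push_neg at hDpos
    set a : ℝ := A/(2*q) with ha
    set b : ℝ := Real.sqrt (-D) / (2*q) with hb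
    have hbb : (Real.sqrt (-D))^2 = -D := Real.sq_sqrt (by linarith)
    have hbb' : (Real.sqrt (-D))^2 = 4*q - ((q:ℝ)+1)^2*lam^2 := by rw [hbb, hD, hA]; ring
    have habs : a^2 + b^2 = (q:ℝ)⁻¹ := by
      rw [ha, hb]; field_simp; linear_combination hbb'
    refine ⟨(a:ℂ) + (b:ℂ)*Complex.I, (a:ℂ) + ((-b:ℝ):ℂ)*Complex.I, ?_, ?_, ?_, ?_⟩
    · rw [show ((((q:ℝ)+1) * lam / q : ℝ) : ℂ) = ((2*a : ℝ):ℂ) from by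
        norm_cast; rw [ha, hA]; field_simp; push_cast; ring]
      push_cast; ring
    · rw [show (((q:ℝ)⁻¹ : ℝ) : ℂ) = ((a^2 + b^2 : ℝ):ℂ) from by rw [habs]]
      push_cast
      linear_combination (-(b:ℂ)^2) * Complex.I_sq
    · rw [Complex.norm_def, Complex.normSq_add_mul_I, habs]
      exact le_max_left _ _
    · rw [Complex.norm_def, Complex.normSq_add_mul_I]
      have h2 : a^2 + (-b)^2 = (q:ℝ)⁻¹ := by rw [← habs]; ring
      rw [h2]
      exact le_max_left _ _

lemma sph_formula (q : ℕ) (hq : 2 ≤ q) (lam : ℝ) (μ ν : ℂ)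
    (hs' : (μ + ν) * (q:ℂ) = ((q:ℂ)+1) * (lam:ℂ))
    (hp' : μ * ν * (q:ℂ) = 1) :
    ∀ k : ℕ, ((q:ℂ)+1) * ((sphPR q (k+2) lam : ℝ) : ℂ) * q
      = (q:ℂ)^2 * hseqAux μ ν (k+2) - hseqAux μ ν k := by
  have hq0 : (q:ℂ) ≠ 0 := by simp; omega
  have hqr0 : (q:ℝ) ≠ 0 := by positivity
  intro k
  induction k using Nat.twoStepInduction with
  | zero =>
    have ha2 : ((sphPR q 2 lam : ℝ) : ℂ) * q = ((q:ℂ)+1) * lam * lam - 1 := by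
      rw [show sphPR q 2 lam = (((q:ℝ)+1) * lam * lam - 1)/q from rfl]
      push_cast
      field_simp
    simp only [hseqAux]
    push_cast
    linear_combination ((q:ℂ)+1) * ha2
      - (((q:ℂ)+1)*(lam:ℂ) + (q:ℂ)*(μ+ν)) * hs' + (q:ℂ) * hp'
  | one =>
    have ha2 : ((sphPR q 2 lam : ℝ) : ℂ) * q = ((q:ℂ)+1) * lam * lam - 1 := by
      rw [show sphPR q 2 lam = (((q:ℝ)+1) * lam * lam - 1)/q from rfl]
      push_cast
      field_simp
    have ha3 : ((sphPR q 3 lam : ℝ) : ℂ) * q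
        = ((q:ℂ)+1) * lam * ((sphPR q 2 lam : ℝ) : ℂ) - lam := by
      rw [show sphPR q 3 lam = (((q:ℝ)+1) * lam * sphPR q 2 lam - lam)/q from rfl]
      push_cast
      field_simp
    simp only [hseqAux]
    push_cast
    linear_combination ((q:ℂ)+1) * ha3 + (μ+ν)*((q:ℂ)+1) * ha2
      + (-(((q:ℂ)+1) * ((sphPR q 2 lam : ℝ) : ℂ))
          - (μ+ν)*(((q:ℂ)+1)*(lam:ℂ) + (q:ℂ)*(μ+ν)) + 1) * hs'
      + (2*(q:ℂ)*(μ+ν)) * hp'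
  | more n ih1 ih2 =>
    have ha4 : ((sphPR q (n+4) lam : ℝ) : ℂ) * q
        = ((q:ℂ)+1) * lam * ((sphPR q (n+3) lam : ℝ) : ℂ)
          - ((sphPR q (n+2) lam : ℝ) : ℂ) := by
      rw [show sphPR q (n+4) lam
        = (((q:ℝ)+1) * lam * sphPR q (n+3) lam - sphPR q (n+2) lam)/q from rfl]
      push_cast
      field_simp
    have hrec2 := hseqAux_rec μ ν (n+2)
    have hrec0 := hseqAux_rec μ ν n
    show ((q:ℂ)+1) * ((sphPR q (n+4) lam : ℝ) : ℂ) * q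
      = (q:ℂ)^2 * hseqAux μ ν (n+4) - hseqAux μ ν (n+2)
    linear_combination ((q:ℂ)+1) * ha4 + (μ+ν) * ih2 - (μ*ν) * ih1
      - (((q:ℂ)+1) * ((sphPR q (n+3) lam : ℝ) : ℂ)) * hs'
      + (((q:ℂ)+1) * ((sphPR q (n+2) lam : ℝ) : ℂ)) * hp'
      + hrec0 - (q:ℂ)^2 * hrec2

lemma sph_poly_bound (q : ℕ) (hq : 2 ≤ q) (β lam : ℝ) (hβ0 : 0 < β) (hβ1 : β < 1)
    (hlam : |lam| ≤ 1 - β) (k : ℕ) :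
    |sphPR q k lam| ≤ (k+1) * (max (Real.sqrt (q:ℝ)⁻¹) (1 - β))^k := by
  set r : ℝ := max (Real.sqrt (q:ℝ)⁻¹) (1 - β) with hr
  have hq0 : (0:ℝ) < (q:ℝ) := by positivity
  have hr0 : 0 < r := lt_of_lt_of_le (by linarith) (le_max_right _ _)
  have hr2 : (q:ℝ)⁻¹ ≤ r^2 := by
    have h1 : Real.sqrt (q:ℝ)⁻¹ ≤ r := le_max_left _ _
    have h2 : (Real.sqrt (q:ℝ)⁻¹)^2 = (q:ℝ)⁻¹ := Real.sq_sqrt (by positivity)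
    nlinarith [Real.sqrt_nonneg ((q:ℝ)⁻¹)]
  match k with
  | 0 => simp [sphPR]
  | 1 =>
    have h1 : |sphPR q 1 lam| = |lam| := rfl
    have h2 : |lam| ≤ r := hlam.trans (le_max_right _ _)
    rw [h1]
    push_cast
    nlinarith
  | (k+2) =>
    obtain ⟨μ, ν, hsum, hprod, hμ, hν⟩ := sph_exists_mu_nu q hq β lam hβ0 hlam
    have hqc0 : (q:ℂ) ≠ 0 := by simp; omega
    have hs' : (μ + ν) * (q:ℂ) = ((q:ℂ)+1) * (lam:ℂ) := by
      rw [hsum]; push_cast; field_simp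
    have hp' : μ * ν * (q:ℂ) = 1 := by
      rw [hprod]; push_cast; field_simp
    have hform := sph_formula q hq lam μ ν hs' hp' k
    have hb2 := hseqAux_bound μ ν r hr0.le hμ hν (k+2)
    have hb0 := hseqAux_bound μ ν r hr0.le hμ hν k
    -- take absolute values in the formula
    have habs : ((q:ℝ)+1) * |sphPR q (k+2) lam| * q
        = ‖(q:ℂ)^2 * hseqAux μ ν (k+2) - hseqAux μ ν k‖ := by
      rw [← hform]
      rw [norm_mul, norm_mul]
      have e1 : ‖(q:ℂ)+1‖ = (q:ℝ)+1 := by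
        rw [show ((q:ℂ)+1) = (((q:ℝ)+1 : ℝ) : ℂ) from by push_cast; ring,
          Complex.norm_real, Real.norm_eq_abs]
        exact abs_of_pos (by linarith)
      have e2 : ‖(q:ℂ)‖ = (q:ℝ) := by
        rw [show ((q:ℂ)) = (((q:ℝ) : ℝ) : ℂ) from by push_cast; ring, Complex.norm_real, Real.norm_eq_abs]
        exact abs_of_pos hq0
      rw [e1, e2, Complex.norm_real, Real.norm_eq_abs]
    have htri : ‖(q:ℂ)^2 * hseqAux μ ν (k+2) - hseqAux μ ν k‖
        ≤ (q:ℝ)^2 * (((k:ℝ)+3) * r^(k+2)) + ((k:ℝ)+1) * r^k := by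
      have t1 : ‖(q:ℂ)^2 * hseqAux μ ν (k+2) - hseqAux μ ν k‖
          ≤ ‖(q:ℂ)^2 * hseqAux μ ν (k+2)‖ + ‖hseqAux μ ν k‖ := by
        rw [sub_eq_add_neg]
        refine (norm_add_le _ _).trans ?_
        rw [norm_neg]
      have t2 : ‖(q:ℂ)^2 * hseqAux μ ν (k+2)‖
          ≤ (q:ℝ)^2 * (((k:ℝ)+3) * r^(k+2)) := by
        rw [norm_mul, norm_pow]
        have e2 : ‖(q:ℂ)‖ = (q:ℝ) := by
          rw [show ((q:ℂ)) = (((q:ℝ) : ℝ) : ℂ) from by push_cast; ring, Complex.norm_real, Real.norm_eq_abs]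
          exact abs_of_pos hq0
        rw [e2]
        have : ((k:ℝ)+2+1) * r^(k+2) = ((k:ℝ)+3) * r^(k+2) := by ring
        push_cast at hb2
        nlinarith [norm_nonneg (hseqAux μ ν (k+2)), sq_nonneg (q:ℝ)]
      push_cast at hb0
      linarith
    have hqr1 : (1:ℝ) ≤ (q:ℝ) * r^2 := by
      have h6 : (q:ℝ) * (q:ℝ)⁻¹ = 1 := mul_inv_cancel₀ (ne_of_gt hq0)
      nlinarith
    have hstep : ((k:ℝ)+1) * r^k ≤ (q:ℝ) * (((k:ℝ)+1) * r^(k+2)) := by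
      have h8 : r^k ≤ ((q:ℝ)*r^2) * r^k :=
        le_mul_of_one_le_left (pow_nonneg hr0.le k) hqr1
      have h9 : ((k:ℝ)+1) * r^k ≤ ((k:ℝ)+1) * (((q:ℝ)*r^2) * r^k) :=
        mul_le_mul_of_nonneg_left h8 (by positivity)
      calc ((k:ℝ)+1) * r^k ≤ ((k:ℝ)+1) * (((q:ℝ)*r^2) * r^k) := h9
        _ = (q:ℝ) * (((k:ℝ)+1) * r^(k+2)) := by ring
    have hfin : ((q:ℝ)+1) * |sphPR q (k+2) lam| * q
        ≤ ((q:ℝ)+1) * (((k:ℝ)+3) * r^(k+2)) * q := by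
      rw [habs]
      calc ‖(q:ℂ)^2 * hseqAux μ ν (k+2) - hseqAux μ ν k‖
          ≤ (q:ℝ)^2 * (((k:ℝ)+3) * r^(k+2)) + ((k:ℝ)+1) * r^k := by
            push_cast at htri ⊢; linarith
        _ ≤ (q:ℝ)^2 * (((k:ℝ)+3) * r^(k+2)) + (q:ℝ) * (((k:ℝ)+1) * r^(k+2)) := by
            push_cast; linarith
        _ ≤ ((q:ℝ)+1) * (((k:ℝ)+3) * r^(k+2)) * q := by
            have hdiff : ((q:ℝ)+1) * (((k:ℝ)+3) * r^(k+2)) * q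
                - ((q:ℝ)^2 * (((k:ℝ)+3) * r^(k+2)) + (q:ℝ) * (((k:ℝ)+1) * r^(k+2)))
                = 2*(q:ℝ)*r^(k+2) := by ring
            have h10 : 0 ≤ 2*(q:ℝ)*r^(k+2) := by positivity
            linarith
    have hq1 : (0:ℝ) < (q:ℝ)+1 := by linarith
    have hfin2 : |sphPR q (k+2) lam| ≤ ((k:ℝ)+3) * r^(k+2) := by
      have h11 := le_of_mul_le_mul_right hfin hq0
      exact le_of_mul_le_mul_left h11 hq1
    calc |sphPR q (k+2) lam| ≤ ((k:ℝ)+3) * r^(k+2) := hfin2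
      _ = ((k+2:ℕ)+1) * r^(k+2) := by push_cast; ring

lemma geom_aux (y : ℝ) (h0 : 0 ≤ y) (h1 : y < 1) (k : ℕ) :
    ((k:ℝ)+1) * y^k ≤ 1/(1-y) := by
  have hy1 : 0 < 1 - y := by linarith
  have hle : ((k:ℝ)+1) * y^k ≤ ∑ i ∈ Finset.range (k+1), y^i := by
    have hterm : ∀ i ∈ Finset.range (k+1), y^k ≤ y^i := by
      intro i hi
      have hik : i ≤ k := Nat.lt_succ_iff.mp (Finset.mem_range.mp hi)
      exact pow_le_pow_of_le_one h0 h1.le hik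
    calc ((k:ℝ)+1) * y^k = ∑ _i ∈ Finset.range (k+1), y^k := by
          rw [Finset.sum_const, Finset.card_range]; push_cast; ring
      _ ≤ ∑ i ∈ Finset.range (k+1), y^i := Finset.sum_le_sum hterm
  have hsum : ∑ i ∈ Finset.range (k+1), y^i ≤ 1/(1-y) := by
    rw [geom_sum_eq (ne_of_lt h1) (k+1)]
    rw [show (y^(k+1) - 1)/(y - 1) = (1 - y^(k+1))/(1-y) from by
      rw [← neg_div_neg_eq]; ring_nf]
    rw [div_le_div_iff₀ hy1 hy1]
    nlinarith [pow_nonneg h0 (k+1)]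
  linarith

/-- Exponential decay of `P_k(λ)` uniformly for `λ ∈ [-1+β, 1-β]`. -/
theorem sphP_exponential_decay (q : ℕ) (hq : 2 ≤ q) (β : ℝ) (hβ0 : 0 < β) (hβ1 : β < 1) :
    ∃ C : ℝ, 0 < C ∧ ∃ β' : ℝ, 0 < β' ∧
      ∀ lam : ℝ, -1 + β ≤ lam → lam ≤ 1 - β →
        ∀ k : ℕ, |sphPR q k lam| ≤ C * (q : ℝ) ^ (-(β' * k)) := by
  have hq0 : (0:ℝ) < (q:ℝ) := by positivity
  have hq1 : (1:ℝ) < (q:ℝ) := by exact_mod_cast hq.trans_lt' (by norm_num)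
  set r : ℝ := max (Real.sqrt (q:ℝ)⁻¹) (1 - β) with hrdef
  have hr0 : 0 < r := lt_of_lt_of_le (by linarith) (le_max_right _ _)
  have hrlt1 : r < 1 := by
    apply max_lt
    · rw [show (1:ℝ) = Real.sqrt 1 from (Real.sqrt_one).symm]
      apply Real.sqrt_lt_sqrt (by positivity)
      rw [inv_lt_one_iff₀]; right; exact hq1
    · linarith
  set y : ℝ := Real.sqrt r with hydef
  have hy0 : 0 < y := Real.sqrt_pos.mpr hr0
  have hy1 : y < 1 := by
    rw [hydef, show (1:ℝ) = Real.sqrt 1 from (Real.sqrt_one).symm]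
    exact Real.sqrt_lt_sqrt hr0.le hrlt1
  have hyy : y * y = r := Real.mul_self_sqrt hr0.le
  have hlogq : 0 < Real.log q := Real.log_pos hq1
  have hlogr : Real.log r < 0 := Real.log_neg hr0 hrlt1
  have hy1' : 0 < 1 - y := by linarith
  refine ⟨1/(1-y), by positivity, -Real.log r / (2 * Real.log (q:ℝ)),
    div_pos (neg_pos.mpr hlogr) (by linarith), ?_⟩
  intro lam hl1 hl2 k
  have hlam : |lam| ≤ 1 - β := abs_le.mpr ⟨by linarith, hl2⟩
  have hrpow : (q:ℝ) ^ (-((-Real.log r / (2 * Real.log (q:ℝ))) * k)) = y^k := by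
    rw [Real.rpow_def_of_pos hq0]
    have e1 : Real.log (q:ℝ) * (-((-Real.log r / (2 * Real.log (q:ℝ))) * k))
        = (k:ℝ) * (Real.log r / 2) := by
      field_simp
    rw [e1, Real.exp_nat_mul]
    congr 1
    rw [hydef, Real.sqrt_eq_rpow, Real.rpow_def_of_pos hr0]
    congr 1
    ring
  rw [hrpow]
  have hmain := sph_poly_bound q hq β lam hβ0 hβ1 hlam k
  have hgeom := geom_aux y hy0.le hy1 k
  have hsplit : ((k:ℝ)+1) * r^k = (((k:ℝ)+1) * y^k) * y^k := by
    rw [← hyy]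
    rw [mul_pow]
    ring
  calc |sphPR q k lam| ≤ ((k:ℝ)+1) * r^k := by
        have := hmain; push_cast at this ⊢; linarith
    _ = (((k:ℝ)+1) * y^k) * y^k := hsplit
    _ ≤ (1/(1-y)) * y^k := by
        apply mul_le_mul_of_nonneg_right hgeom (pow_nonneg hy0.le k)
end
end

section
/- Let q ≥ 2, let G = (V,E) be a finite (q+1)-regular graph with directed bond set B and non-backtracking matrix M♯, and let A be its normalized adjacency operator. Let φ : V → ℂ be a nonzero function with Aφ = λφ where λ ≠ ±1, and let ε ∈ ℂ satisfy qε² − (q+1)λε + 1 = 0. Then the function f ∈ ℂ^B defined by f(e) = φ(t(e)) − ε φ(o(e)) is a nonzero eigenvector of M♯ with eigenvalue 1/(qε); moreover the two roots ε₁, ε₂ of qε² − (q+1)λε + 1 = 0 give the two eigenvalues 1/(qε₁), 1/(qε₂) = 2/((q+1)(λ ∓ √(λ² − 4q/(q+1)²))) of M♯. -/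
open Finset

noncomputable section

/-- The non-backtracking transition matrix `M♯` on the set `B` of directed bonds:
`(M♯ f)(e) = (1/q) Σ_{e' : o(e') = t(e), e' ≠ ê} f(e')`. -/
def nbMat (q : ℕ) {B V : Type} [Fintype B] [DecidableEq B] [DecidableEq V]
    (o t : B → V) (rev : B → B) : Matrix B B ℂ :=
  fun e e' => if o e' = t e ∧ e' ≠ rev e then ((q : ℂ))⁻¹ else 0

/-- The normalized adjacency operator on vertices, in the directed-bond model of a
multigraph: `(A f)(x) = (1/(q+1)) Σ_{e : o(e) = x} f(t(e))`. -/
def adjB (q : ℕ) {B V : Type} [Fintype B] [Fintype V] [DecidableEq V]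
    (o t : B → V) : Matrix V V ℂ :=
  fun x y => ((Finset.univ.filter (fun e => o e = x ∧ t e = y)).card : ℂ) / ((q : ℂ) + 1)

/-- The data `(o, t, rev)` on the finite bond set `B` over the vertex set `V` describes a
`(q+1)`-regular multigraph. -/
def IsBondGraph (q : ℕ) {B V : Type} [Fintype B] [DecidableEq V]
    (o t : B → V) (rev : B → B) : Prop :=
  Function.Involutive rev ∧ (∀ e, rev e ≠ e) ∧ (∀ e, o (rev e) = t e) ∧
    (∀ x : V, (Finset.univ.filter (fun e => o e = x)).card = q + 1)

/-- Eigenvectors of the non-backtracking matrix built from eigenfunctions of the adjacency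
operator (Anantharaman–Le Masson, §7.1 (i)): if `Aφ = λφ`, `λ ≠ ±1`, and
`qε² − (q+1)λε + 1 = 0`, then `f(e) = φ(t(e)) − ε φ(o(e))` is a nonzero eigenvector of `M♯`
with eigenvalue `1/(qε) = 2/((q+1)(λ ∓ √(λ² − 4q/(q+1)²)))`. -/
theorem nbMat_eigenvector_from_adj
    (q : ℕ) (hq : 2 ≤ q) {B V : Type} [Fintype B] [Fintype V] [DecidableEq B] [DecidableEq V]
    (o t : B → V) (rev : B → B) (hG : IsBondGraph q o t rev)
    (φ : V → ℂ) (hφ : φ ≠ 0)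
    (lam : ℂ) (hlam1 : lam ≠ 1) (hlam2 : lam ≠ -1)
    (heig : (adjB q o t).mulVec φ = lam • φ)
    (ε : ℂ) (hε : (q : ℂ) * ε ^ 2 - ((q : ℂ) + 1) * lam * ε + 1 = 0) :
    (fun e => φ (t e) - ε * φ (o e)) ≠ 0 ∧
    (nbMat q o t rev).mulVec (fun e => φ (t e) - ε * φ (o e)) =
      ((q : ℂ) * ε)⁻¹ • (fun e => φ (t e) - ε * φ (o e)) ∧
    ∃ w : ℂ, w ^ 2 = lam ^ 2 - 4 * (q : ℂ) / ((q : ℂ) + 1) ^ 2 ∧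
      ((q : ℂ) * ε)⁻¹ = 2 / (((q : ℂ) + 1) * (lam - w)) := by
  obtain ⟨hrev, hrevne, horev, hdeg⟩ := hG
  have hq0 : (q : ℂ) ≠ 0 := by
    exact_mod_cast Nat.cast_ne_zero.mpr (by omega : q ≠ 0)
  have hq1 : (q : ℂ) + 1 ≠ 0 := Nat.cast_add_one_ne_zero q
  have hε0 : ε ≠ 0 := by
    intro h; rw [h] at hε; simp at hε
  have htrev : ∀ e, t (rev e) = o e := by
    intro e
    have := horev (rev e)
    rw [hrev e] at this
    exact this.symm
  -- key sum: over bonds leaving x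
  have hsum : ∀ x : V, ∑ e ∈ univ.filter (fun e => o e = x), φ (t e)
      = ((q : ℂ) + 1) * lam * φ x := by
    intro x
    have h1 := congrFun heig x
    simp only [Matrix.mulVec, dotProduct, adjB, Pi.smul_apply, smul_eq_mul] at h1
    have h2 : ∑ e ∈ univ.filter (fun e => o e = x), φ (t e)
        = ∑ y : V, ∑ e ∈ (univ.filter (fun e => o e = x)).filter (fun e => t e = y), φ (t e) := by
      rw [Finset.sum_fiberwise]
    rw [h2]
    have h3 : ∀ y : V, ∑ e ∈ (univ.filter (fun e => o e = x)).filter (fun e => t e = y), φ (t e)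
        = ((univ.filter (fun e => o e = x ∧ t e = y)).card : ℂ) * φ y := by
      intro y
      rw [Finset.filter_filter]
      rw [Finset.sum_congr rfl (fun e he => by
        simp only [Finset.mem_filter] at he
        rw [he.2.2])]
      simp [Finset.sum_const]
    simp only [h3]
    have h4 : ∑ y : V, ((univ.filter (fun e => o e = x ∧ t e = y)).card : ℂ) * φ y
        = ((q : ℂ) + 1) * ∑ y : V, ((univ.filter (fun e => o e = x ∧ t e = y)).card : ℂ) / ((q:ℂ)+1) * φ y := by
      rw [Finset.mul_sum]
      refine Finset.sum_congr rfl (fun y _ => ?_)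
      field_simp
    rw [h4, h1]
    ring
  have hcard : ∀ x : V, ((univ.filter (fun e => o e = x)).card : ℂ) = (q : ℂ) + 1 := by
    intro x
    rw [hdeg x]
    push_cast
    ring
  -- the eigenvector equation
  have heigen : (nbMat q o t rev).mulVec (fun e => φ (t e) - ε * φ (o e)) =
      ((q : ℂ) * ε)⁻¹ • (fun e => φ (t e) - ε * φ (o e)) := by
    funext e
    simp only [Matrix.mulVec, dotProduct, nbMat, Pi.smul_apply, smul_eq_mul]
    have hmem : rev e ∈ univ.filter (fun e' => o e' = t e) := by
      simp [horev e]
    have hstep : ∑ e' : B, (if o e' = t e ∧ e' ≠ rev e then ((q : ℂ))⁻¹ else 0) * (φ (t e') - ε * φ (o e'))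
        = ((q : ℂ))⁻¹ * ∑ e' ∈ (univ.filter (fun e' => o e' = t e)).erase (rev e), (φ (t e') - ε * φ (o e')) := by
      have hset : (univ.filter (fun e' => o e' = t e)).erase (rev e)
          = univ.filter (fun e' => o e' = t e ∧ e' ≠ rev e) := by
        ext a
        simp [Finset.mem_erase, Finset.mem_filter, and_comm]
      rw [hset, Finset.mul_sum, Finset.sum_filter]
      refine Finset.sum_congr rfl (fun a _ => ?_)
      by_cases h : o a = t e ∧ a ≠ rev e
      · rw [if_pos h, if_pos h]
      · rw [if_neg h, if_neg h, zero_mul]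
    rw [hstep]
    rw [Finset.sum_erase_eq_sub hmem]
    have hsub : ∑ e' ∈ univ.filter (fun e' => o e' = t e), (φ (t e') - ε * φ (o e'))
        = ((q : ℂ) + 1) * lam * φ (t e) - ε * (((q : ℂ) + 1) * φ (t e)) := by
      rw [Finset.sum_sub_distrib, hsum (t e)]
      congr 1
      have : ∑ e' ∈ univ.filter (fun e' => o e' = t e), ε * φ (o e')
          = ∑ e' ∈ univ.filter (fun e' => o e' = t e), ε * φ (t e) := by
        refine Finset.sum_congr rfl (fun a ha => ?_)
        simp only [Finset.mem_filter] at ha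
        rw [ha.2]
      rw [this, Finset.sum_const, nsmul_eq_mul, hdeg (t e)]
      push_cast
      ring
    rw [hsub, htrev e, horev e]
    field_simp
    linear_combination (-φ (t e)) * hε
  refine ⟨?_, heigen, ?_⟩
  · -- nonzero
    have hε1 : ε ^ 2 ≠ 1 := by
      intro h
      have hfac : (ε - 1) * (ε + 1) = 0 := by ring_nf; linear_combination h
      rcases mul_eq_zero.mp hfac with h1 | h1
      · have hε1' : ε = 1 := by linear_combination h1
        rw [hε1'] at hε
        apply hlam1
        have : ((q : ℂ) + 1) * (lam - 1) = 0 := by linear_combination -hε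
        rcases mul_eq_zero.mp this with h2 | h2
        · exact absurd h2 hq1
        · linear_combination h2
      · have hε1' : ε = -1 := by linear_combination h1
        rw [hε1'] at hε
        apply hlam2
        have : ((q : ℂ) + 1) * (lam + 1) = 0 := by linear_combination hε
        rcases mul_eq_zero.mp this with h2 | h2
        · exact absurd h2 hq1
        · linear_combination h2
    intro hf
    apply hφ
    funext x
    have hx : ∃ e, o e = x := by
      have : 0 < (univ.filter (fun e => o e = x)).card := by rw [hdeg x]; omega
      obtain ⟨e, he⟩ := Finset.card_pos.mp this
      simp only [Finset.mem_filter] at he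
      exact ⟨e, he.2⟩
    obtain ⟨e, he⟩ := hx
    have h1 : φ (t e) - ε * φ (o e) = 0 := congrFun hf e
    have h2 : φ (t (rev e)) - ε * φ (o (rev e)) = 0 := congrFun hf (rev e)
    rw [htrev e, horev e] at h2
    have : φ x * (1 - ε ^ 2) = 0 := by
      rw [← he]
      linear_combination h2 + ε * h1
    rcases mul_eq_zero.mp this with h | h
    · exact h
    · exact absurd (by linear_combination -h) hε1
  · -- the eigenvalue formula
    refine ⟨lam - 2 * (q : ℂ) * ε / ((q : ℂ) + 1), ?_, ?_⟩
    · field_simp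
      linear_combination (4*(q:ℂ)) * hε
    · have : ((q : ℂ) + 1) * (lam - (lam - 2 * (q : ℂ) * ε / ((q : ℂ) + 1))) = 2 * ((q : ℂ) * ε) := by
        field_simp
        ring
      rw [this]
      rw [eq_comm, div_eq_iff (by exact mul_ne_zero two_ne_zero (mul_ne_zero hq0 hε0))]
      field_simp
end
end

section
/- Let q ≥ 2 and let G = (V,E) be a finite connected (q+1)-regular graph with directed bond set B and non-backtracking matrix M♯. Then the eigenspace {f ∈ ℂ^B : M♯f = (1/q) f} equals the space of odd divergence-free functions {f ∈ ℂ^B : f(ê) = −f(e) for all e, and Σ_{e : o(e)=x} f(e) = 0 for all x ∈ V}, and its dimension equals |E| − |V| + 1 (the rank of the fundamental group of G). Moreover, for every closed circuit γ made of consecutive bonds (e₁,…,e_k), the function f_γ = Σ_{j=1}^k (δ_{e_j} − δ_{ê_j}) lies in this eigenspace. -/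
open Finset

noncomputable section

set_option linter.unusedSectionVars false
set_option linter.unusedVariables false

section Aux
variable {B V : Type} [Fintype B] [Fintype V] [DecidableEq B] [DecidableEq V]
variable {B V : Type} [Fintype B] [Fintype V] [DecidableEq B] [DecidableEq V]

lemma nb_apply (q : ℕ) (o t : B → V) (rev : B → B)
    (hor : ∀ e, o (rev e) = t e) (f : B → ℂ) (e : B) :
    (nbMat q o t rev).mulVec f e
      = (q:ℂ)⁻¹ * ((∑ e' ∈ univ.filter (fun e' => o e' = t e), f e') - f (rev e)) := by
  have hfe : (univ.filter (fun e' => o e' = t e ∧ e' ≠ rev e))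
      = (univ.filter (fun e' => o e' = t e)).erase (rev e) := by
    ext e'; simp [Finset.mem_erase, and_comm]
  have h1 : (nbMat q o t rev).mulVec f e
      = ∑ e' ∈ univ.filter (fun e' => o e' = t e ∧ e' ≠ rev e), (q:ℂ)⁻¹ * f e' := by
    rw [Finset.sum_filter]
    simp [Matrix.mulVec, dotProduct, nbMat, ite_mul, zero_mul]
  rw [h1, ← Finset.mul_sum, hfe,
    Finset.sum_erase_eq_sub (by simp [hor e])]

lemma eig_iff (q : ℕ) (hq : 2 ≤ q) [Nonempty V] (o t : B → V) (rev : B → B)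
    (hinv : Function.Involutive rev) (hne : ∀ e, rev e ≠ e)
    (hor : ∀ e, o (rev e) = t e)
    (hdeg : ∀ x : V, (univ.filter (fun e => o e = x)).card = q + 1)
    (hconn : ∀ x y : V, Relation.ReflTransGen (fun u v => ∃ e, o e = u ∧ t e = v) x y)
    (f : B → ℂ) :
    (nbMat q o t rev).mulVec f = ((q:ℂ))⁻¹ • f ↔
      ((∀ e, f (rev e) = -f e) ∧
        ∀ x : V, ∑ e ∈ Finset.univ.filter (fun e => o e = x), f e = 0) := by
  have hq0 : (q:ℂ) ≠ 0 := Nat.cast_ne_zero.mpr (by omega)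
  set S : V → ℂ := fun x => ∑ e ∈ univ.filter (fun e => o e = x), f e with hSdef
  have hiff : (nbMat q o t rev).mulVec f = ((q:ℂ))⁻¹ • f ↔
      ∀ e, S (t e) = f e + f (rev e) := by
    rw [funext_iff]
    apply forall_congr'; intro e
    rw [nb_apply q o t rev hor f e]
    simp only [Pi.smul_apply, smul_eq_mul]
    rw [mul_right_inj' (inv_ne_zero hq0), sub_eq_iff_eq_add, add_comm]
  rw [hiff]
  constructor
  · intro h
    have hsym : ∀ e, S (o e) = S (t e) := by
      intro e
      have h1 := h e
      have h2 := h (rev e)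
      rw [hinv e] at h2
      have h3 : t (rev e) = o e := by rw [← hor (rev e), hinv e]
      rw [h3] at h2
      rw [h1, h2, add_comm]
    have hconst : ∀ x y : V, S x = S y := by
      intro x y
      induction hconn x y with
      | refl => rfl
      | tail hab hbc ih =>
        obtain ⟨e, he1, he2⟩ := hbc
        rw [ih, ← he1, ← he2, hsym e]
    obtain ⟨x₀⟩ := (inferInstance : Nonempty V)
    -- sum both sides of h over all e
    have hsum : ∑ e : B, S (t e) = ∑ e : B, (f e + f (rev e)) :=
      Finset.sum_congr rfl fun e _ => h e
    have hL : ∑ e : B, S (t e) = (Fintype.card B : ℂ) * S x₀ := by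
      rw [Finset.sum_congr rfl fun e _ => hconst (t e) x₀]
      simp only [Finset.sum_const, Finset.card_univ, nsmul_eq_mul]
    have hfib : ∑ x : V, S x = ∑ e : B, f e := by
      exact Finset.sum_fiberwise_of_maps_to (fun e _ => Finset.mem_univ (o e)) f
    have hVsum : ∑ x : V, S x = (Fintype.card V : ℂ) * S x₀ := by
      rw [Finset.sum_congr rfl fun x _ => hconst x x₀]
      simp only [Finset.sum_const, Finset.card_univ, nsmul_eq_mul]
    have hrevsum : ∑ e : B, f (rev e) = ∑ e : B, f e :=
      Fintype.sum_bijective rev hinv.bijective _ _ (fun e => rfl)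
    have hR : ∑ e : B, (f e + f (rev e)) = 2 * ((Fintype.card V : ℂ) * S x₀) := by
      rw [Finset.sum_add_distrib, hrevsum, ← hfib, hVsum]; ring
    have hcardB : (Fintype.card B : ℕ) = Fintype.card V * (q + 1) := by
      have := Finset.card_eq_sum_card_fiberwise
        (f := o) (s := (univ : Finset B)) (t := (univ : Finset V))
        (fun e _ => Finset.mem_univ (o e))
      rw [Finset.card_univ] at this
      rw [this, Finset.sum_congr rfl fun x _ => hdeg x]
      simp [Finset.sum_const, mul_comm]
    have hS0 : S x₀ = 0 := by
      have heq : (Fintype.card B : ℂ) * S x₀ = 2 * ((Fintype.card V : ℂ) * S x₀) := by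
        rw [← hL, ← hR, hsum]
      rw [hcardB] at heq
      push_cast at heq
      have hV0 : (Fintype.card V : ℂ) ≠ 0 :=
        Nat.cast_ne_zero.mpr Fintype.card_ne_zero
      have hq1 : (q : ℂ) - 1 ≠ 0 := by
        intro hc
        have : (q:ℂ) = 1 := by linear_combination hc
        have : q = 1 := Nat.cast_injective (by exact_mod_cast this)
        omega
      have key : ((q:ℂ) - 1) * ((Fintype.card V : ℂ) * S x₀) = 0 := by ring_nf; ring_nf at heq; linear_combination heq
      rcases mul_eq_zero.mp key with h' | h'
      · exact absurd h' hq1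
      · rcases mul_eq_zero.mp h' with h'' | h''
        · exact absurd h'' hV0
        · exact h''
    have hSall : ∀ x, S x = 0 := fun x => (hconst x x₀).trans hS0
    refine ⟨fun e => ?_, hSall⟩
    have := h e
    rw [hSall (t e)] at this
    linear_combination -this
  · rintro ⟨h1, h2⟩ e
    have h0 : S (t e) = 0 := h2 (t e)
    rw [h0, h1 e]
    ring

variable {B V : Type} [Fintype B] [Fintype V] [DecidableEq B] [DecidableEq V]

def divMap (o : B → V) : (B → ℂ) →ₗ[ℂ] (V → ℂ) where
  toFun f := fun x => ∑ e ∈ univ.filter (fun e => o e = x), f e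
  map_add' f g := funext fun x => Finset.sum_add_distrib
  map_smul' c f := funext fun x => by simp [Finset.mul_sum]

def oddSub (rev : B → B) : Submodule ℂ (B → ℂ) where
  carrier := {f | ∀ e, f (rev e) = -f e}
  add_mem' := fun hf hg e => by simp only [Pi.add_apply, hf e, hg e]; ring
  zero_mem' := fun e => by simp
  smul_mem' := fun c f hf e => by simp [hf e]

def sumMap : (V → ℂ) →ₗ[ℂ] ℂ where
  toFun g := ∑ v, g v
  map_add' f g := Finset.sum_add_distrib
  map_smul' c f := by simp [Finset.mul_sum]

lemma finrank_oddSub (rev : B → B) (hinv : Function.Involutive rev)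
    (hne : ∀ e, rev e ≠ e) :
    2 * Module.finrank ℂ (oddSub rev : Submodule ℂ (B → ℂ)) = Fintype.card B := by
  classical
  set ord := Fintype.equivFin B with hord
  set S : Finset B := univ.filter (fun e => (ord e : ℕ) < (ord (rev e) : ℕ)) with hSdef
  have hne' : ∀ e : B, (ord e : ℕ) ≠ (ord (rev e) : ℕ) := by
    intro e h
    exact hne e (ord.injective (Fin.val_injective h)).symm
  have hmem : ∀ e, rev e ∈ S ↔ e ∉ S := by
    intro e
    have h := hne' e
    simp only [hSdef, Finset.mem_filter, Finset.mem_univ, true_and, hinv e]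
    omega
  -- the linear equivalence between odd functions and functions on S
  let F : (↥(S : Finset B) → ℂ) → (B → ℂ) := fun g e =>
    if he : e ∈ S then g ⟨e, he⟩ else -g ⟨rev e, (hmem e).mpr he⟩
  have hF1 : ∀ g e (he : e ∈ S), F g e = g ⟨e, he⟩ := fun g e he => dif_pos he
  have hF2 : ∀ g e (he : e ∉ S), F g e = -g ⟨rev e, (hmem e).mpr he⟩ :=
    fun g e he => dif_neg he
  have hFodd : ∀ g, F g ∈ oddSub rev := by
    intro g a
    by_cases he : a ∈ S
    · have h2 : rev a ∉ S := fun h => (hmem a).mp h he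
      rw [hF2 g (rev a) h2, hF1 g a he]
      exact neg_inj.mpr (congrArg g (Subtype.ext (hinv a)))
    · have h2 : rev a ∈ S := (hmem a).mpr he
      rw [hF1 g (rev a) h2, hF2 g a he, neg_neg]
  let E : (oddSub rev : Submodule ℂ (B → ℂ)) ≃ₗ[ℂ] (↥(S : Finset B) → ℂ) :=
  { toFun := fun f s => (f : B → ℂ) s
    map_add' := fun f g => rfl
    map_smul' := fun c f => rfl
    invFun := fun g => ⟨F g, hFodd g⟩
    left_inv := by
      intro f
      apply Subtype.ext
      funext a
      show F (fun s => (f : B → ℂ) s) a = (f : B → ℂ) a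
      by_cases he : a ∈ S
      · exact hF1 (fun s => (f : B → ℂ) s.1) a he
      · have h3 : (f : B → ℂ) (rev a) = -(f : B → ℂ) a := f.2 a
        calc F (fun s => (f : B → ℂ) s.1) a
            = -(f : B → ℂ) (rev a) := hF2 (fun s => (f : B → ℂ) s.1) a he
          _ = (f : B → ℂ) a := by rw [h3, neg_neg]
    right_inv := by
      intro g
      funext s
      show F g s.1 = g s
      exact hF1 g s.1 s.2 }
  have hfr : Module.finrank ℂ (oddSub rev : Submodule ℂ (B → ℂ)) = S.card := by
    rw [E.finrank_eq, Module.finrank_fintype_fun_eq_card, Fintype.card_coe]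
  have hcS : S.card = Sᶜ.card := by
    apply Finset.card_bij (fun e _ => rev e)
    · intro a ha
      rw [Finset.mem_compl]
      intro h
      exact (hmem a).mp h ha
    · intro a _ b _ h
      exact hinv.injective h
    · intro b hb
      rw [Finset.mem_compl] at hb
      exact ⟨rev b, (hmem b).mpr hb, hinv b⟩
  have hcompl : Sᶜ.card = Fintype.card B - S.card := Finset.card_compl S
  have hle : S.card ≤ Fintype.card B := Finset.card_le_univ S
  omega

lemma exists_flow (o t : B → V) (rev : B → B)
    (hinv : Function.Involutive rev) (hor : ∀ e, o (rev e) = t e)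
    (x y : V) (h : Relation.ReflTransGen (fun u v => ∃ e, o e = u ∧ t e = v) x y) :
    ∃ f : B → ℂ, (∀ e, f (rev e) = -f e) ∧
      ∀ v, ∑ e ∈ univ.filter (fun e => o e = v), f e
          = (if v = x then 1 else 0) - (if v = y then 1 else 0) := by
  induction h with
  | refl => exact ⟨0, by simp, by simp⟩
  | @tail b c hab hbc ih =>
    obtain ⟨f, hodd, hdiv⟩ := ih
    obtain ⟨e, he1, he2⟩ := hbc
    refine ⟨f + (fun b' => (if b' = e then (1:ℂ) else 0) - (if b' = rev e then 1 else 0)),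
      ?_, ?_⟩
    · intro a
      have h1 : (rev a = e) ↔ (a = rev e) := by
        constructor
        · rintro rfl; exact (hinv a).symm
        · rintro rfl; exact hinv e
      have h2 : (rev a = rev e) ↔ (a = e) := hinv.injective.eq_iff
      simp only [Pi.add_apply, hodd a, if_congr h1 rfl rfl, if_congr h2 rfl rfl]
      ring
    · intro v
      simp only [Pi.add_apply]
      rw [Finset.sum_add_distrib, hdiv v]
      have hinner : ∑ b' ∈ univ.filter (fun b' => o b' = v),
          ((if b' = e then (1:ℂ) else 0) - (if b' = rev e then 1 else 0))
          = (if v = b then 1 else 0) - (if v = c then 1 else 0) := by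
        rw [Finset.sum_sub_distrib,
          Finset.sum_ite_eq' (univ.filter (fun b' => o b' = v)) e (fun _ => (1:ℂ)),
          Finset.sum_ite_eq' (univ.filter (fun b' => o b' = v)) (rev e) (fun _ => (1:ℂ))]
        simp [Finset.mem_filter, hor, he1, he2, eq_comm]
      rw [hinner]
      ring

variable {B V : Type} [Fintype B] [Fintype V] [DecidableEq B] [DecidableEq V]

lemma circuit_props (o t : B → V) (rev : B → B)
    (hinv : Function.Involutive rev)
    (hor : ∀ e, o (rev e) = t e) (k : ℕ) (e : Fin (k+1) → B)
    (hc : ∀ j, t (e j) = o (e (j+1))) :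
    (∀ b, (fun b => ∑ j, ((if b = e j then (1:ℂ) else 0) - (if b = rev (e j) then 1 else 0))) (rev b)
        = -(fun b => ∑ j, ((if b = e j then (1:ℂ) else 0) - (if b = rev (e j) then 1 else 0))) b) ∧
    (∀ x : V, ∑ b ∈ univ.filter (fun b => o b = x),
        (∑ j, ((if b = e j then (1:ℂ) else 0) - (if b = rev (e j) then 1 else 0))) = 0) := by
  have hrev_eq : ∀ a c : B, rev a = c ↔ a = rev c := by
    intro a c
    constructor
    · rintro rfl; exact (hinv a).symm
    · rintro rfl; exact hinv c
  constructor
  · intro b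
    simp only
    have h1 : ∀ j, ((if rev b = e j then (1:ℂ) else 0) - (if rev b = rev (e j) then 1 else 0))
        = -((if b = e j then (1:ℂ) else 0) - (if b = rev (e j) then 1 else 0)) := by
      intro j
      rw [if_congr (hrev_eq b (e j)) rfl rfl,
        if_congr (hinv.injective.eq_iff (a := b) (b := e j)) rfl rfl]
      ring
    rw [Finset.sum_congr rfl fun j _ => h1 j]
    exact Finset.sum_neg_distrib _
  · intro x
    rw [Finset.sum_comm]
    have h2 : ∀ j : Fin (k+1), ∑ b ∈ univ.filter (fun b => o b = x),
        ((if b = e j then (1:ℂ) else 0) - (if b = rev (e j) then 1 else 0))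
        = (if o (e j) = x then 1 else 0) - (if o (e (j+1)) = x then 1 else 0) := by
      intro j
      rw [Finset.sum_sub_distrib]
      rw [Finset.sum_ite_eq' (univ.filter (fun b => o b = x)) (e j) (fun _ => (1:ℂ)),
        Finset.sum_ite_eq' (univ.filter (fun b => o b = x)) (rev (e j)) (fun _ => (1:ℂ))]
      simp [Finset.mem_filter, hor, hc j]
    rw [Finset.sum_congr rfl fun j _ => h2 j, Finset.sum_sub_distrib, sub_eq_zero]
    exact Fintype.sum_equiv (Equiv.subRight 1) _ _
      (fun j => by simp)


lemma finrank_eigen (q : ℕ) (hq : 2 ≤ q) [Nonempty V] (o t : B → V) (rev : B → B)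
    (hinv : Function.Involutive rev) (hne : ∀ e, rev e ≠ e)
    (hor : ∀ e, o (rev e) = t e)
    (hdeg : ∀ x : V, (univ.filter (fun e => o e = x)).card = q + 1)
    (hconn : ∀ x y : V, Relation.ReflTransGen (fun u v => ∃ e, o e = u ∧ t e = v) x y) :
    Module.finrank ℂ
        ↥(LinearMap.ker ((nbMat q o t rev).mulVecLin - ((q : ℂ))⁻¹ • LinearMap.id)) =
      Fintype.card B / 2 - Fintype.card V + 1 := by
  classical
  set O : Submodule ℂ (B → ℂ) := oddSub rev with hO
  let L : O →ₗ[ℂ] (V → ℂ) := (divMap o).comp O.subtype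
  -- the eigenspace equals the image of ker L under the inclusion
  have hker : LinearMap.ker ((nbMat q o t rev).mulVecLin - ((q : ℂ))⁻¹ • LinearMap.id)
      = (LinearMap.ker L).map O.subtype := by
    ext f
    simp only [LinearMap.mem_ker, Submodule.mem_map, LinearMap.sub_apply,
      LinearMap.smul_apply, LinearMap.id_apply, sub_eq_zero, Matrix.mulVecLin_apply]
    rw [eig_iff q hq o t rev hinv hne hor hdeg hconn f]
    constructor
    · rintro ⟨hodd, hdiv⟩
      refine ⟨⟨f, hodd⟩, ?_, rfl⟩
      funext v
      exact hdiv v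
    · rintro ⟨⟨g, hg⟩, hgker, rfl⟩
      refine ⟨hg, fun x => ?_⟩
      exact congrFun hgker x
  -- range of L is the kernel of the sum functional
  have hrange : LinearMap.range L = LinearMap.ker (sumMap (V := V)) := by
    apply le_antisymm
    · rintro _ ⟨⟨f, hf⟩, rfl⟩
      rw [LinearMap.mem_ker]
      show ∑ v, divMap o f v = 0
      have h2 : ∑ v, divMap o f v = ∑ e : B, f e :=
        Finset.sum_fiberwise_of_maps_to (fun e _ => Finset.mem_univ (o e)) f
      have h3 : ∑ e : B, f e = ∑ e : B, f (rev e) :=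
        (Fintype.sum_bijective rev hinv.bijective _ _ (fun e => rfl)).symm
      have h4 : ∑ e : B, f (rev e) = -∑ e : B, f e := by
        rw [← Finset.sum_neg_distrib]
        exact Finset.sum_congr rfl fun e _ => hf e
      have h5 : (2:ℂ) * ∑ e : B, f e = 0 := by
        have := h3.trans h4
        linear_combination this
      rw [h2]
      exact (mul_eq_zero.mp h5).resolve_left two_ne_zero
    · intro g hg
      rw [LinearMap.mem_ker] at hg
      have hgsum : ∑ v, g v = 0 := hg
      obtain ⟨x₀⟩ := (inferInstance : Nonempty V)
      choose p hpodd hpdiv using fun x => exists_flow o t rev hinv hor x x₀ (hconn x x₀)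
      refine ⟨∑ x : V, g x • (⟨p x, hpodd x⟩ : O), ?_⟩
      have hLsum : L (∑ x : V, g x • (⟨p x, hpodd x⟩ : O))
          = ∑ x : V, g x • (divMap o (p x)) := by
        rw [map_sum]
        exact Finset.sum_congr rfl fun x _ => by rw [map_smul]; rfl
      rw [hLsum]
      funext v
      rw [Finset.sum_apply]
      have hterm : ∀ x : V, (g x • divMap o (p x)) v
          = g x * ((if v = x then 1 else 0) - (if v = x₀ then 1 else 0)) := by
        intro x
        simp only [Pi.smul_apply, smul_eq_mul]
        rw [show divMap o (p x) v = _ from hpdiv x v]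
      rw [Finset.sum_congr rfl fun x _ => hterm x]
      simp only [mul_sub, Finset.sum_sub_distrib, mul_ite, mul_one, mul_zero,
        Finset.sum_ite_eq, Finset.mem_univ, if_true]
      by_cases hv : v = x₀ <;> simp [hv, hgsum]
  -- rank computations
  have hrkL : Module.finrank ℂ (LinearMap.range L) + Module.finrank ℂ (LinearMap.ker L)
      = Module.finrank ℂ O := LinearMap.finrank_range_add_finrank_ker L
  have hsumsurj : Function.Surjective (sumMap (V := V)) := by
    intro c
    obtain ⟨x₀⟩ := (inferInstance : Nonempty V)
    refine ⟨Pi.single x₀ c, ?_⟩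
    show ∑ v, Pi.single x₀ c v = c
    simp [Pi.single_apply]
  have hrksum : Module.finrank ℂ (LinearMap.range (sumMap (V := V)))
      + Module.finrank ℂ (LinearMap.ker (sumMap (V := V))) = Fintype.card V := by
    rw [LinearMap.finrank_range_add_finrank_ker, Module.finrank_fintype_fun_eq_card]
  have hrange_top : LinearMap.range (sumMap (V := V)) = ⊤ :=
    LinearMap.range_eq_top.mpr hsumsurj
  have hrk1 : Module.finrank ℂ (LinearMap.range (sumMap (V := V))) = 1 := by
    rw [hrange_top, finrank_top, Module.finrank_self]
  have hOdim : 2 * Module.finrank ℂ O = Fintype.card B := finrank_oddSub rev hinv hne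
  have hfinal : Module.finrank ℂ
      ↥(LinearMap.ker ((nbMat q o t rev).mulVecLin - ((q : ℂ))⁻¹ • LinearMap.id))
      = Module.finrank ℂ (LinearMap.ker L) := by
    rw [hker]
    exact Submodule.finrank_map_subtype_eq O (LinearMap.ker L)
  have hcardB : 3 * Fintype.card V ≤ Fintype.card B := by
    have hB : (Fintype.card B : ℕ) = ∑ x : V, (q + 1) := by
      have := Finset.card_eq_sum_card_fiberwise
        (f := o) (s := (univ : Finset B)) (t := (univ : Finset V))
        (fun e _ => Finset.mem_univ (o e))
      rw [Finset.card_univ] at this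
      rw [this]
      exact Finset.sum_congr rfl fun x _ => hdeg x
    rw [hB, Finset.sum_const, Finset.card_univ, smul_eq_mul]
    have : 3 ≤ q + 1 := by omega
    calc 3 * Fintype.card V = Fintype.card V * 3 := by ring
      _ ≤ Fintype.card V * (q + 1) := Nat.mul_le_mul_left _ this
  have hV1 : 1 ≤ Fintype.card V := Fintype.card_pos
  rw [hfinal, ← hrange] at *
  omega

/-- The `1/q`-eigenspace of the non-backtracking matrix (Anantharaman–Le Masson, §7.1 (ii)):
it consists exactly of the odd divergence-free functions on bonds, its dimension is
`|E| − |V| + 1` (the rank of the fundamental group), and every closed circuit of consecutive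
bonds gives rise to an eigenfunction `f_γ = Σ_j (δ_{e_j} − δ_{ê_j})`. -/
theorem nbMat_eigenspace_one_over_q
    (q : ℕ) (hq : 2 ≤ q) {B V : Type} [Fintype B] [Fintype V] [DecidableEq B] [DecidableEq V]
    [Nonempty V]
    (o t : B → V) (rev : B → B) (hG : IsBondGraph q o t rev)
    (hconn : ∀ x y : V, Relation.ReflTransGen (fun u v => ∃ e, o e = u ∧ t e = v) x y) :
    (∀ f : B → ℂ,
      (nbMat q o t rev).mulVec f = ((q : ℂ))⁻¹ • f ↔
        ((∀ e, f (rev e) = -f e) ∧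
          ∀ x : V, ∑ e ∈ Finset.univ.filter (fun e => o e = x), f e = 0)) ∧
    Module.finrank ℂ
        ↥(LinearMap.ker ((nbMat q o t rev).mulVecLin - ((q : ℂ))⁻¹ • LinearMap.id)) =
      Fintype.card B / 2 - Fintype.card V + 1 ∧
    (∀ (k : ℕ) (e : Fin (k + 1) → B), (∀ j, t (e j) = o (e (j + 1))) →
      (nbMat q o t rev).mulVec
          (fun b => ∑ j, ((if b = e j then (1 : ℂ) else 0) - (if b = rev (e j) then 1 else 0)))
        = ((q : ℂ))⁻¹ •
          (fun b => ∑ j, ((if b = e j then (1 : ℂ) else 0) - (if b = rev (e j) then 1 else 0)))) := by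
  obtain ⟨hinv, hne, hor, hdeg⟩ := hG
  refine ⟨fun f => eig_iff q hq o t rev hinv hne hor hdeg hconn f,
    finrank_eigen q hq o t rev hinv hne hor hdeg hconn, ?_⟩
  intro k e hc
  obtain ⟨hodd, hdiv⟩ := circuit_props o t rev hinv hor k e hc
  exact (eig_iff q hq o t rev hinv hne hor hdeg hconn _).mpr ⟨hodd, hdiv⟩

end Aux
end
end

section
/- Let q ≥ 2 and let G = (V,E) be a finite connected (q+1)-regular graph with directed bond set B and non-backtracking matrix M♯. Then the eigenspace {f ∈ ℂ^B : M♯f = −(1/q) f} equals the space of even functions with vanishing vertex sums {f ∈ ℂ^B : f(ê) = f(e) for all e, and Σ_{e : o(e)=x} f(e) = 0 for all x ∈ V}; its dimension equals |E| − |V| + 1 if G is bipartite, and |E| − |V| if G is not bipartite. -/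
open Finset

noncomputable section

section Aux

variable {B V : Type} [Fintype B] [Fintype V] [DecidableEq B] [DecidableEq V]
variable {q : ℕ} {o t : B → V} {rev : B → B}

lemma nbMat_mulVec_apply (hor : ∀ e, o (rev e) = t e) (f : B → ℂ) (e : B) :
    (nbMat q o t rev).mulVec f e
      = (q : ℂ)⁻¹ * ((∑ e' ∈ univ.filter (fun e' => o e' = t e), f e') - f (rev e)) := by
  unfold nbMat Matrix.mulVec dotProduct
  simp only [ite_mul, zero_mul]
  rw [Finset.sum_ite, Finset.sum_const_zero, add_zero]
  have hfil : univ.filter (fun e' => o e' = t e ∧ e' ≠ rev e)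
      = (univ.filter (fun e' => o e' = t e)).erase (rev e) := by
    ext a; simp [and_comm, eq_comm (a := a)]
  rw [hfil, Finset.sum_erase_eq_sub (by simp [hor e]), ← Finset.mul_sum, mul_sub]

lemma part1 (hq : 2 ≤ q) (hinv : Function.Involutive rev)
    (hor : ∀ e, o (rev e) = t e)
    (hdeg : ∀ x : V, (univ.filter (fun e => o e = x)).card = q + 1) (f : B → ℂ) :
    (nbMat q o t rev).mulVec f = (-((q : ℂ))⁻¹) • f ↔
      ((∀ e, f (rev e) = f e) ∧
        ∀ x : V, ∑ e ∈ univ.filter (fun e => o e = x), f e = 0) := by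
  have hq0 : (q : ℂ) ≠ 0 := Nat.cast_ne_zero.mpr (by omega)
  set S : V → ℂ := fun x => ∑ e ∈ univ.filter (fun e => o e = x), f e with hSdef
  have htr : ∀ e, t (rev e) = o e := fun e => by
    have h := hor (rev e); rw [hinv e] at h; exact h.symm
  constructor
  · intro hf
    have heq : ∀ e, S (t e) = f (rev e) - f e := by
      intro e
      have h1 := congrFun hf e
      rw [nbMat_mulVec_apply hor] at h1
      have h2 : (q : ℂ)⁻¹ * (S (t e) - f (rev e)) = (q : ℂ)⁻¹ * (- f e) := by
        simpa [neg_mul, mul_comm] using h1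
      have := mul_left_cancel₀ (inv_ne_zero hq0) h2
      linear_combination this
    have hS : ∀ e, S (o e) = f e - f (rev e) := by
      intro e
      have := heq (rev e)
      rwa [htr, hinv] at this
    have halt : ∀ e, S (t e) = - S (o e) := by
      intro e; rw [heq, hS]; ring
    -- grouping lemma
    have hgroup : ∀ g : B → ℂ, ∑ e : B, g e
        = ∑ x : V, ∑ e ∈ univ.filter (fun e => o e = x), g e := by
      intro g
      exact (Finset.sum_fiberwise univ o g).symm
    set c : ℂ := ∑ x : V, S x * (starRingEnd ℂ) (S x) with hc
    have id1 : ∑ e : B, f e * (starRingEnd ℂ) (S (o e)) = c := by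
      rw [hgroup (fun e => f e * (starRingEnd ℂ) (S (o e)))]
      refine Finset.sum_congr rfl fun x _ => ?_
      rw [show ∑ e ∈ univ.filter (fun e => o e = x), f e * (starRingEnd ℂ) (S (o e))
          = ∑ e ∈ univ.filter (fun e => o e = x), f e * (starRingEnd ℂ) (S x) from
        Finset.sum_congr rfl fun e he => by
          rw [(Finset.mem_filter.mp he).2]]
      rw [← Finset.sum_mul]
    have id2 : ∑ e : B, f (rev e) * (starRingEnd ℂ) (S (o e)) = -c := by
      have hre : ∑ e : B, f (rev e) * (starRingEnd ℂ) (S (o e))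
          = ∑ e : B, f e * (starRingEnd ℂ) (S (o (rev e))) := by
        exact Fintype.sum_equiv (hinv.toPerm rev) _ _ (fun e => by
          simp [hinv e])
      rw [hre]
      have : ∀ e : B, f e * (starRingEnd ℂ) (S (o (rev e)))
          = - (f e * (starRingEnd ℂ) (S (o e))) := by
        intro e
        rw [hor, halt, map_neg]
        ring
      rw [Finset.sum_congr rfl (fun e _ => this e), Finset.sum_neg_distrib, id1]
    have id3 : ∑ e : B, (f e - f (rev e)) * (starRingEnd ℂ) (S (o e)) = ((q : ℂ) + 1) * c := by
      have : ∀ e : B, (f e - f (rev e)) * (starRingEnd ℂ) (S (o e))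
          = S (o e) * (starRingEnd ℂ) (S (o e)) := fun e => by rw [← hS]
      rw [Finset.sum_congr rfl (fun e _ => this e),
        hgroup (fun e => S (o e) * (starRingEnd ℂ) (S (o e)))]
      rw [hc, Finset.mul_sum]
      refine Finset.sum_congr rfl fun x _ => ?_
      rw [show ∑ e ∈ univ.filter (fun e => o e = x), S (o e) * (starRingEnd ℂ) (S (o e))
          = ∑ e ∈ univ.filter (fun e => o e = x), S x * (starRingEnd ℂ) (S x) from
        Finset.sum_congr rfl fun e he => by rw [(Finset.mem_filter.mp he).2]]
      rw [Finset.sum_const, hdeg x, nsmul_eq_mul]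
      push_cast
      ring
    have hcc : ((q : ℂ) - 1) * c = 0 := by
      have h2c : (2 : ℂ) * c = ((q : ℂ) + 1) * c := by
        rw [← id3]
        simp only [sub_mul, Finset.sum_sub_distrib, id1, id2]
        ring
      linear_combination -h2c
    have hq1 : (q : ℂ) - 1 ≠ 0 := by
      intro h
      have : (q : ℂ) = 1 := by linear_combination h
      have : q = 1 := by exact_mod_cast this
      omega
    have hc0 : c = 0 := by
      rcases mul_eq_zero.mp hcc with h | h
      · exact absurd h hq1
      · exact h
    have hS0 : ∀ x, S x = 0 := by
      have : (∑ x : V, Complex.normSq (S x) : ℝ) = 0 := by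
        have : ((∑ x : V, Complex.normSq (S x) : ℝ) : ℂ) = 0 := by
          rw [← hc0, hc]
          push_cast
          exact Finset.sum_congr rfl fun x _ => (Complex.mul_conj (S x)).symm
        exact_mod_cast this
      intro x
      have hterm := (Finset.sum_eq_zero_iff_of_nonneg
        (fun y _ => Complex.normSq_nonneg (S y))).mp this x (Finset.mem_univ x)
      exact Complex.normSq_eq_zero.mp hterm
    refine ⟨fun e => ?_, fun x => hS0 x⟩
    have := hS e
    rw [hS0 (o e)] at this
    linear_combination this
  · rintro ⟨hev, hsum⟩
    funext e
    rw [nbMat_mulVec_apply hor, hsum (t e), hev e]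
    simp only [Pi.smul_apply, smul_eq_mul]
    ring

end Aux

section Aux2

open Matrix

variable {B V : Type} [Fintype B] [Fintype V] [DecidableEq B] [DecidableEq V]
variable (o t : B → V) (rev : B → B)

/-- incidence-type matrix whose kernel is the eigenspace -/
def bondA (o : B → V) (rev : B → B) : Matrix (B ⊕ V) B ℂ :=
  Matrix.of fun j e =>
    match j with
    | Sum.inl e' => (if e = rev e' then 1 else 0) - (if e = e' then 1 else 0)
    | Sum.inr x => if o e = x then 1 else 0

lemma bondA_mulVec_inl (f : B → ℂ) (e' : B) :
    (bondA o rev).mulVec f (Sum.inl e') = f (rev e') - f e' := by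
  unfold bondA Matrix.mulVec dotProduct
  simp [sub_mul, Finset.sum_sub_distrib]

lemma bondA_mulVec_inr (f : B → ℂ) (x : V) :
    (bondA o rev).mulVec f (Sum.inr x) = ∑ e ∈ univ.filter (fun e => o e = x), f e := by
  unfold bondA Matrix.mulVec dotProduct
  rw [Finset.sum_filter]
  simp [ite_mul]

variable {o t rev} in
lemma bondA_transpose_mulVec (hinv : Function.Involutive rev) (F : (B ⊕ V) → ℂ) (e : B) :
    (bondA o rev)ᵀ.mulVec F e
      = F (Sum.inl (rev e)) - F (Sum.inl e) + F (Sum.inr (o e)) := by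
  unfold bondA Matrix.mulVec dotProduct Matrix.transpose
  rw [Fintype.sum_sum_type]
  have hiff : ∀ e' : B, (e = rev e') = (rev e = e') := by
    intro e'
    apply propext
    constructor
    · intro h; rw [h, hinv]
    · intro h; rw [← h, hinv]
  simp only [Matrix.of_apply, hiff, sub_mul, ite_mul, one_mul, zero_mul,
    Finset.sum_sub_distrib]
  simp

/-- even functions on bonds -/
def EvS (rev : B → B) : Submodule ℂ (B → ℂ) where
  carrier := {f | ∀ e, f (rev e) = f e}
  add_mem' := by intro a b ha hb e; simp [ha e, hb e]
  zero_mem' := by intro e; simp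
  smul_mem' := by intro c a ha e; simp [ha e]

/-- alternating functions on vertices -/
def AltS (o t : B → V) : Submodule ℂ (V → ℂ) where
  carrier := {h | ∀ e, h (t e) = - h (o e)}
  add_mem' := by intro a b ha hb e; simp [ha e, hb e]; ring
  zero_mem' := by intro e; simp
  smul_mem' := by intro c a ha e; simp [ha e]

lemma mem_EvS {rev : B → B} {f : B → ℂ} : f ∈ EvS rev ↔ ∀ e, f (rev e) = f e := Iff.rfl

lemma mem_AltS {o t : B → V} {h : V → ℂ} : h ∈ AltS o t ↔ ∀ e, h (t e) = - h (o e) := Iff.rfl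

/-- shear equivalence splitting the kernel of the transpose -/
def shear (o : B → V) : ((B ⊕ V) → ℂ) ≃ₗ[ℂ] ((B → ℂ) × (V → ℂ)) :=
  LinearEquiv.ofLinear
    { toFun := fun f =>
        (fun e => f (Sum.inl e) - 2⁻¹ * f (Sum.inr (o e)), fun x => f (Sum.inr x)),
      map_add' := by
        intro f g
        refine Prod.ext ?_ ?_ <;> funext a <;> simp <;> ring
      map_smul' := by
        intro c f
        refine Prod.ext ?_ ?_ <;> funext a <;> simp <;> ring }
    { toFun := fun p => Sum.elim (fun e => p.1 e + 2⁻¹ * p.2 (o e)) p.2,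
      map_add' := by
        intro p q
        funext j
        cases j <;> simp <;> ring
      map_smul' := by
        intro c p
        funext j
        cases j <;> simp <;> ring }
    (by
      apply LinearMap.ext
      intro p
      refine Prod.ext ?_ ?_ <;> funext a <;> simp)
    (by
      apply LinearMap.ext
      intro f
      funext j
      cases j <;> simp)

lemma shear_symm_apply (o : B → V) (p : (B → ℂ) × (V → ℂ)) :
    (shear (V := V) o).symm p = Sum.elim (fun e => p.1 e + 2⁻¹ * p.2 (o e)) p.2 := by
  rfl

/-- product of submodules: finrank adds -/
lemma finrank_submodule_prod {M N : Type} [AddCommGroup M] [AddCommGroup N]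
    [Module ℂ M] [Module ℂ N] [FiniteDimensional ℂ M] [FiniteDimensional ℂ N]
    (p : Submodule ℂ M) (q : Submodule ℂ N) :
    Module.finrank ℂ ↥(p.prod q) = Module.finrank ℂ ↥p + Module.finrank ℂ ↥q := by
  have e : ↥(p.prod q) ≃ₗ[ℂ] ↥p × ↥q :=
    { toFun := fun x => (⟨x.1.1, x.2.1⟩, ⟨x.1.2, x.2.2⟩),
      invFun := fun a => ⟨(a.1.1, a.2.1), ⟨a.1.2, a.2.2⟩⟩,
      map_add' := fun x y => rfl,
      map_smul' := fun c x => rfl,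
      left_inv := fun x => rfl,
      right_inv := fun a => rfl }
  rw [LinearEquiv.finrank_eq e, Module.finrank_prod]

variable {o t rev} in
lemma map_ker_transpose (hinv : Function.Involutive rev)
    (hor : ∀ e, o (rev e) = t e) :
    (LinearMap.ker ((bondA o rev)ᵀ).mulVecLin).map (shear (V := V) o).toLinearMap
      = (EvS rev).prod (AltS o t) := by
  have htr : ∀ e, t (rev e) = o e := fun e => by
    have h := hor (rev e); rw [hinv e] at h; exact h.symm
  ext p
  obtain ⟨g, h⟩ := p
  erw [Submodule.mem_map_equiv]
  rw [LinearMap.mem_ker, Submodule.mem_prod]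
  rw [shear_symm_apply]
  constructor
  · intro h0
    have hC : ∀ e : B, (g (rev e) + 2⁻¹ * h (t e)) - (g e + 2⁻¹ * h (o e)) + h (o e) = 0 := by
      intro e
      have := congrFun h0 e
      rw [Matrix.mulVecLin_apply, bondA_transpose_mulVec hinv] at this
      simpa [hor] using this
    have halt : ∀ e, h (t e) = - h (o e) := by
      intro e
      have h1 := hC e
      have h2 := hC (rev e)
      rw [hinv, htr, hor] at h2
      linear_combination h1 + h2
    refine ⟨fun e => ?_, halt⟩
    have h1 := hC e
    have h2 := halt e
    linear_combination h1 - 2⁻¹ * h2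
  · rintro ⟨hev, halt⟩
    funext e
    rw [Matrix.mulVecLin_apply, bondA_transpose_mulVec hinv]
    simp only [Sum.elim_inl, Sum.elim_inr, hor]
    have h1 := hev e
    have h2 := halt e
    simp only [Pi.zero_apply]
    linear_combination h1 + 2⁻¹ * h2

variable {rev} in
lemma evS_rank (hinv : Function.Involutive rev) (hfp : ∀ e, rev e ≠ e) :
    2 * Module.finrank ℂ ↥(EvS rev) = Fintype.card B := by
  classical
  set P : (B → ℂ) →ₗ[ℂ] (B → ℂ) :=
    (2⁻¹ : ℂ) • (LinearMap.id + LinearMap.funLeft ℂ ℂ rev) with hP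
  have hproj : LinearMap.IsProj (EvS rev) P := by
    constructor
    · intro f e
      simp only [hP, LinearMap.smul_apply, LinearMap.add_apply, LinearMap.id_apply,
        LinearMap.funLeft_apply, Pi.smul_apply, Pi.add_apply, smul_eq_mul, hinv e]
      ring
    · intro f hf
      funext e
      have := (mem_EvS.mp hf) e
      simp only [hP, LinearMap.smul_apply, LinearMap.add_apply, LinearMap.id_apply,
        LinearMap.funLeft_apply, Pi.smul_apply, Pi.add_apply, smul_eq_mul, this]
      ring
  have htrace : LinearMap.trace ℂ (B → ℂ) P = (Module.finrank ℂ ↥(EvS rev) : ℂ) :=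
    hproj.trace
  have htrR : LinearMap.trace ℂ (B → ℂ) (LinearMap.funLeft ℂ ℂ rev) = 0 := by
    rw [LinearMap.trace_eq_matrix_trace ℂ (Pi.basisFun ℂ B)]
    unfold Matrix.trace
    refine Finset.sum_eq_zero fun e _ => ?_
    simp [Matrix.diag, LinearMap.toMatrix_apply, Pi.single_apply, hfp e]
  have htrP : LinearMap.trace ℂ (B → ℂ) P = 2⁻¹ * (Fintype.card B : ℂ) := by
    rw [hP, _root_.map_smul, map_add, htrR, LinearMap.trace_id, add_zero,
      Module.finrank_fintype_fun_eq_card]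
    simp
  have : ((2 * Module.finrank ℂ ↥(EvS rev) : ℕ) : ℂ) = ((Fintype.card B : ℕ) : ℂ) := by
    push_cast
    rw [← htrace, htrP]
    ring
  exact_mod_cast this

variable {o t} in
lemma altS_rank_bip [Nonempty V]
    (hconn : ∀ x y : V, Relation.ReflTransGen (fun u v => ∃ e, o e = u ∧ t e = v) x y)
    (hbip : ∃ P : V → Prop, ∀ e, P (o e) ↔ ¬ P (t e)) :
    Module.finrank ℂ ↥(AltS o t) = 1 := by
  classical
  obtain ⟨P, hP⟩ := hbip
  set ε : V → ℂ := fun x => if P x then 1 else -1 with hε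
  have hεflip : ∀ e, ε (t e) = - ε (o e) := by
    intro e
    by_cases h : P (o e)
    · have := (hP e).mp h
      simp [hε, h, this]
    · have : P (t e) := by
        by_contra hc
        exact h ((hP e).mpr hc)
      simp [hε, h, this]
  have hεne : ∀ x, ε x ≠ 0 := by
    intro x
    by_cases h : P x <;> simp [hε, h]
  have hmem : ε ∈ AltS o t := hεflip
  have hspan : AltS o t = Submodule.span ℂ {ε} := by
    apply le_antisymm
    · intro h hh
      obtain x₀ : V := Classical.arbitrary V
      have key : ∀ y, h y * ε x₀ = h x₀ * ε y := by
        intro y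
        induction hconn x₀ y with
        | refl => ring
        | tail hab hbc ih =>
          obtain ⟨e, he1, he2⟩ := hbc
          have h1 : h (t e) = - h (o e) := hh e
          have h2 := hεflip e
          rw [he1] at h1 h2
          rw [he2] at h1 h2
          rw [h1, h2]
          linear_combination -ih
      rw [Submodule.mem_span_singleton]
      refine ⟨h x₀ / ε x₀, ?_⟩
      funext y
      have := key y
      have hne := hεne x₀
      simp only [Pi.smul_apply, smul_eq_mul]
      field_simp
      linear_combination -this
    · rw [Submodule.span_le, Set.singleton_subset_iff]
      exact hmem
  rw [hspan]
  exact finrank_span_singleton (by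
    intro hc
    exact hεne (Classical.arbitrary V) (congrFun hc _))

variable {o t} in
lemma altS_rank_nonbip [Nonempty V]
    (hconn : ∀ x y : V, Relation.ReflTransGen (fun u v => ∃ e, o e = u ∧ t e = v) x y)
    (hnbip : ¬ ∃ P : V → Prop, ∀ e, P (o e) ↔ ¬ P (t e)) :
    Module.finrank ℂ ↥(AltS o t) = 0 := by
  classical
  have hbot : AltS o t = ⊥ := by
    rw [Submodule.eq_bot_iff]
    intro h hh
    obtain x₀ : V := Classical.arbitrary V
    have claim : ∀ y, h y = h x₀ ∨ h y = - h x₀ := by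
      intro y
      induction hconn x₀ y with
      | refl => exact Or.inl rfl
      | tail hab hbc ih =>
        obtain ⟨e, he1, he2⟩ := hbc
        have h1 : h (t e) = - h (o e) := hh e
        rw [he1, he2] at h1
        rcases ih with hl | hr
        · right; rw [h1, hl]
        · left; rw [h1, hr]; ring
    have hx0 : h x₀ = 0 := by
      by_contra hc
      apply hnbip
      refine ⟨fun x => h x = h x₀, fun e => ?_⟩
      have h1 : h (t e) = - h (o e) := hh e
      constructor
      · intro hoe
        simp only at hoe ⊢
        rw [h1, hoe]
        intro habs
        apply hc
        have : (2 : ℂ) * h x₀ = 0 := by linear_combination -habs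
        simpa using this
      · intro hte
        simp only at hte ⊢
        rcases claim (o e) with hl | hr
        · exact hl
        · exfalso
          apply hte
          rw [h1, hr]
          ring
    funext y
    rcases claim y with hy | hy <;> simp [hy, hx0]
  rw [hbot]
  simp

end Aux2


section Aux2

open Matrix

variable {B V : Type} [Fintype B] [Fintype V] [DecidableEq B] [DecidableEq V]
variable (o t : B → V) (rev : B → B)

variable {o t rev} in
lemma kernel_eq {q : ℕ} (hq : 2 ≤ q) (hinv : Function.Involutive rev)
    (hor : ∀ e, o (rev e) = t e)
    (hdeg : ∀ x : V, (univ.filter (fun e => o e = x)).card = q + 1) :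
    LinearMap.ker ((nbMat q o t rev).mulVecLin - (-((q : ℂ))⁻¹) • LinearMap.id)
      = LinearMap.ker (bondA o rev).mulVecLin := by
  ext f
  rw [LinearMap.mem_ker, LinearMap.mem_ker, LinearMap.sub_apply, LinearMap.smul_apply,
    LinearMap.id_apply, Matrix.mulVecLin_apply, sub_eq_zero, Matrix.mulVecLin_apply,
    part1 hq hinv hor hdeg f]
  constructor
  · rintro ⟨hev, hsum⟩
    funext j
    cases j with
    | inl e => rw [bondA_mulVec_inl, hev e]; simp
    | inr x => rw [bondA_mulVec_inr, hsum x]; simp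
  · intro h0
    constructor
    · intro e
      have := congrFun h0 (Sum.inl e)
      rw [bondA_mulVec_inl] at this
      simp only [Pi.zero_apply] at this
      linear_combination this
    · intro x
      have := congrFun h0 (Sum.inr x)
      rw [bondA_mulVec_inr] at this
      simpa using this

variable {o t rev} in
lemma count_lemma {q : ℕ} (hq : 2 ≤ q) (hinv : Function.Involutive rev)
    (hfp : ∀ e, rev e ≠ e) (hor : ∀ e, o (rev e) = t e)
    (hdeg : ∀ x : V, (univ.filter (fun e => o e = x)).card = q + 1) :
    Module.finrank ℂ ↥(LinearMap.ker (bondA o rev).mulVecLin) + Fintype.card V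
        = Fintype.card B / 2 + Module.finrank ℂ ↥(AltS o t)
      ∧ Fintype.card V ≤ Fintype.card B / 2 := by
  classical
  have h2k : 2 * Module.finrank ℂ ↥(EvS rev) = Fintype.card B := evS_rank hinv hfp
  have h1 : (bondA o rev).rank
      + Module.finrank ℂ ↥(LinearMap.ker (bondA o rev).mulVecLin) = Fintype.card B := by
    unfold Matrix.rank
    rw [LinearMap.finrank_range_add_finrank_ker]
    exact Module.finrank_fintype_fun_eq_card ℂ
  have h2 : ((bondA o rev)ᵀ).rank
      + Module.finrank ℂ ↥(LinearMap.ker ((bondA o rev)ᵀ).mulVecLin)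
        = Fintype.card B + Fintype.card V := by
    unfold Matrix.rank
    rw [LinearMap.finrank_range_add_finrank_ker]
    rw [Module.finrank_fintype_fun_eq_card ℂ, Fintype.card_sum]
  have h3 : ((bondA o rev)ᵀ).rank = (bondA o rev).rank := Matrix.rank_transpose _
  have h4 : Module.finrank ℂ ↥(LinearMap.ker ((bondA o rev)ᵀ).mulVecLin)
      = Module.finrank ℂ ↥(EvS rev) + Module.finrank ℂ ↥(AltS o t) := by
    rw [← LinearEquiv.finrank_map_eq (shear (V := V) o)
      (LinearMap.ker ((bondA o rev)ᵀ).mulVecLin)]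
    erw [map_ker_transpose hinv hor]
    exact finrank_submodule_prod _ _
  have hcard : Fintype.card B = (q + 1) * Fintype.card V := by
    have h5 : Fintype.card B = ∑ x : V, (univ.filter (fun e => o e = x)).card := by
      rw [← Finset.card_univ,
        Finset.card_eq_sum_card_fiberwise (fun e _ => Finset.mem_univ (o e))]
    rw [h5]
    rw [Finset.sum_congr rfl (fun x _ => hdeg x), Finset.sum_const, Finset.card_univ,
      smul_eq_mul, mul_comm]
  have h6 : 3 * Fintype.card V ≤ (q + 1) * Fintype.card V :=
    Nat.mul_le_mul_right _ (by omega)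
  rw [← hcard] at h6
  omega

end Aux2

/-- The `−1/q`-eigenspace of the non-backtracking matrix (Anantharaman–Le Masson, §7.1 (ii)):
it consists exactly of the even functions on bonds with vanishing vertex sums, and its
dimension is `|E| − |V| + 1` if the graph is bipartite, `|E| − |V|` otherwise. -/
theorem nbMat_eigenspace_neg_one_over_q
    (q : ℕ) (hq : 2 ≤ q) {B V : Type} [Fintype B] [Fintype V] [DecidableEq B] [DecidableEq V]
    [Nonempty V]
    (o t : B → V) (rev : B → B) (hG : IsBondGraph q o t rev)
    (hconn : ∀ x y : V, Relation.ReflTransGen (fun u v => ∃ e, o e = u ∧ t e = v) x y) :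
    (∀ f : B → ℂ,
      (nbMat q o t rev).mulVec f = (-((q : ℂ))⁻¹) • f ↔
        ((∀ e, f (rev e) = f e) ∧
          ∀ x : V, ∑ e ∈ Finset.univ.filter (fun e => o e = x), f e = 0)) ∧
    ((∃ P : V → Prop, ∀ e, P (o e) ↔ ¬ P (t e)) →
      Module.finrank ℂ
          ↥(LinearMap.ker ((nbMat q o t rev).mulVecLin - (-((q : ℂ))⁻¹) • LinearMap.id)) =
        Fintype.card B / 2 - Fintype.card V + 1) ∧
    ((¬ ∃ P : V → Prop, ∀ e, P (o e) ↔ ¬ P (t e)) →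
      Module.finrank ℂ
          ↥(LinearMap.ker ((nbMat q o t rev).mulVecLin - (-((q : ℂ))⁻¹) • LinearMap.id)) =
        Fintype.card B / 2 - Fintype.card V) := by
  obtain ⟨hinv, hfp, hor, hdeg⟩ := hG
  refine ⟨fun f => part1 hq hinv hor hdeg f, ?_, ?_⟩
  · intro hbip
    rw [kernel_eq hq hinv hor hdeg]
    obtain ⟨hcount, hle⟩ := count_lemma hq hinv hfp hor hdeg
    rw [altS_rank_bip hconn hbip] at hcount
    omega
  · intro hnbip
    rw [kernel_eq hq hinv hor hdeg]
    obtain ⟨hcount, hle⟩ := count_lemma hq hinv hfp hor hdeg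
    rw [altS_rank_nonbip hconn hnbip] at hcount
    omega
end
end

section
/- Let q ≥ 2, let G = (V,E) be a finite (q+1)-regular graph with directed bond set B, and let φ : V → ℂ with ‖φ‖_{ℓ²(V)} = 1 satisfy Aφ = λφ for a real eigenvalue λ of the normalized adjacency operator A with λ ≠ ±1. Let ε₁ be a root of qε² − (q+1)λε + 1 = 0 with conjugate ε̄₁ ≠ λ, and set μ = (ε̄₁λ − 1)/(ε̄₁ − λ). Then the two functions f₁, f₂' ∈ ℂ^B defined by f₁(e) = φ(t(e)) − ε₁ φ(o(e)) and f₂'(e) = φ(t(e)) − μ φ(o(e)) are orthogonal in ℓ²(B). -/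
open Finset

noncomputable section

/-- Orthogonality of the adapted pair of bond functions built from a normalized adjacency
eigenfunction (Anantharaman–Le Masson, §7.1): with `μ = (ε̄₁λ − 1)/(ε̄₁ − λ)`, the functions
`f₁(e) = φ(t(e)) − ε₁ φ(o(e))` and `f₂'(e) = φ(t(e)) − μ φ(o(e))` are orthogonal in `ℓ²(B)`. -/
theorem nbMat_orthogonal_pair
    (q : ℕ) (hq : 2 ≤ q) {B V : Type} [Fintype B] [Fintype V] [DecidableEq B] [DecidableEq V]
    (o t : B → V) (rev : B → B) (hG : IsBondGraph q o t rev)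
    (φ : V → ℂ) (hnorm : ∑ x, ‖φ x‖ ^ 2 = 1)
    (lam : ℝ) (hlam1 : lam ≠ 1) (hlam2 : lam ≠ -1)
    (heig : (adjB q o t).mulVec φ = (lam : ℂ) • φ)
    (ε₁ : ℂ) (hε : (q : ℂ) * ε₁ ^ 2 - ((q : ℂ) + 1) * (lam : ℂ) * ε₁ + 1 = 0)
    (hne : (starRingEnd ℂ) ε₁ ≠ (lam : ℂ)) :
    ∑ e, (φ (t e) - ε₁ * φ (o e)) *
        (starRingEnd ℂ) (φ (t e) -
          (((starRingEnd ℂ) ε₁ * (lam : ℂ) - 1) / ((starRingEnd ℂ) ε₁ - (lam : ℂ))) * φ (o e))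
      = 0 := by
  obtain ⟨hrev, hfix, hor, hdeg⟩ := hG
  have hlamr : (starRingEnd ℂ) ((lam : ℝ) : ℂ) = (lam : ℂ) := Complex.conj_ofReal lam
  have hq1 : ((q : ℂ) + 1) ≠ 0 := by
    have : ((q + 1 : ℕ) : ℂ) ≠ 0 := Nat.cast_ne_zero.mpr (Nat.succ_ne_zero q)
    simpa [Nat.cast_add] using this
  -- eigenvalue equation per vertex, in filtered-sum form
  have h1 : ∀ x : V, ∑ e ∈ univ.filter (fun e => o e = x), φ (t e)
      = ((q : ℂ) + 1) * (lam : ℂ) * φ x := by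
    intro x
    have hx := congrFun heig x
    simp only [Matrix.mulVec, dotProduct, adjB, Pi.smul_apply, smul_eq_mul] at hx
    have hfib : ∑ e ∈ univ.filter (fun e => o e = x), φ (t e)
        = ∑ y : V, ((univ.filter (fun e => o e = x ∧ t e = y)).card : ℂ) * φ y := by
      rw [← Finset.sum_fiberwise (univ.filter (fun e => o e = x)) t (fun e => φ (t e))]
      refine Finset.sum_congr rfl fun y _ => ?_
      rw [Finset.filter_filter]
      have hconst : ∑ e ∈ univ.filter (fun e => o e = x ∧ t e = y), φ (t e)
          = ∑ _e ∈ univ.filter (fun e => o e = x ∧ t e = y), φ y :=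
        Finset.sum_congr rfl fun e he => by rw [(Finset.mem_filter.mp he).2.2]
      rw [hconst, Finset.sum_const, nsmul_eq_mul, mul_comm]
    have hdiv : ∑ y : V,
        ((univ.filter (fun e => o e = x ∧ t e = y)).card : ℂ) / ((q : ℂ) + 1) * φ y
        = (∑ y : V, ((univ.filter (fun e => o e = x ∧ t e = y)).card : ℂ) * φ y)
          / ((q : ℂ) + 1) := by
      rw [Finset.sum_div]; exact Finset.sum_congr rfl fun y _ => by ring
    rw [hdiv, ← hfib, div_eq_iff hq1] at hx
    rw [hx]; ring
  -- sums over bonds of a function of the origin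
  have sumO : ∀ F : V → ℂ, ∑ e, F (o e) = ((q : ℂ) + 1) * ∑ x, F x := by
    intro F
    rw [← Finset.sum_fiberwise univ o (fun e => F (o e)), Finset.mul_sum]
    refine Finset.sum_congr rfl fun x _ => ?_
    have hconst : ∑ e ∈ univ.filter (fun e => o e = x), F (o e)
        = ∑ _e ∈ univ.filter (fun e => o e = x), F x :=
      Finset.sum_congr rfl fun e he => by rw [(Finset.mem_filter.mp he).2]
    rw [hconst, Finset.sum_const, hdeg x, nsmul_eq_mul]
    push_cast; ring
  -- mixed sums
  have sumM : ∀ F : V → ℂ, ∑ e, F (o e) * φ (t e)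
      = ((q : ℂ) + 1) * (lam : ℂ) * ∑ x, F x * φ x := by
    intro F
    rw [← Finset.sum_fiberwise univ o (fun e => F (o e) * φ (t e)), Finset.mul_sum]
    refine Finset.sum_congr rfl fun x _ => ?_
    have hfac : ∑ e ∈ univ.filter (fun e => o e = x), F (o e) * φ (t e)
        = F x * ∑ e ∈ univ.filter (fun e => o e = x), φ (t e) := by
      rw [Finset.mul_sum]
      exact Finset.sum_congr rfl fun e he => by rw [(Finset.mem_filter.mp he).2]
    rw [hfac, h1 x]; ring
  -- reindexing by rev swaps o and t
  have hto : ∀ e, t (rev e) = o e := by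
    intro e
    have h := hor (rev e)
    rw [hrev e] at h
    exact h.symm
  have swap : ∀ F : B → ℂ, ∑ e, F e = ∑ e, F (rev e) :=
    fun F => (Fintype.sum_bijective rev hrev.bijective _ _ (fun e => rfl)).symm
  -- normalization
  have hN : ∑ x, φ x * (starRingEnd ℂ) (φ x) = 1 := by
    have hterm : ∀ x, φ x * (starRingEnd ℂ) (φ x) = ((‖φ x‖ ^ 2 : ℝ) : ℂ) := by
      intro x
      rw [Complex.mul_conj, Complex.normSq_eq_norm_sq]
    rw [Finset.sum_congr rfl fun x _ => hterm x, ← Complex.ofReal_sum, hnorm,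
      Complex.ofReal_one]
  set c := (starRingEnd ℂ) ε₁ with hc
  set m := (c * (lam : ℂ) - 1) / (c - (lam : ℂ)) with hm
  have hcm : (starRingEnd ℂ) m = (ε₁ * (lam : ℂ) - 1) / (ε₁ - (lam : ℂ)) := by
    rw [hm, map_div₀, map_sub, map_sub, map_mul, map_one, hlamr, hc, Complex.conj_conj]
  have hεne : ε₁ - (lam : ℂ) ≠ 0 := by
    intro h
    exact hne (by rw [hc, show ε₁ = (lam : ℂ) from sub_eq_zero.mp h, hlamr])
  -- the four sums
  have S1 : ∑ e, φ (t e) * (starRingEnd ℂ) (φ (t e)) = ((q : ℂ) + 1) := by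
    rw [swap (fun e => φ (t e) * (starRingEnd ℂ) (φ (t e)))]
    simp only [hto]
    rw [sumO (fun x => φ x * (starRingEnd ℂ) (φ x)), hN, mul_one]
  have S4 : ∑ e, φ (o e) * (starRingEnd ℂ) (φ (o e)) = ((q : ℂ) + 1) := by
    rw [sumO (fun x => φ x * (starRingEnd ℂ) (φ x)), hN, mul_one]
  have S2 : ∑ e, φ (t e) * (starRingEnd ℂ) (φ (o e)) = ((q : ℂ) + 1) * (lam : ℂ) := by
    have h' : ∑ e, φ (t e) * (starRingEnd ℂ) (φ (o e))
        = ∑ e, (starRingEnd ℂ) (φ (o e)) * φ (t e) :=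
      Finset.sum_congr rfl fun e _ => by ring
    have h'' : ∑ x, (starRingEnd ℂ) (φ x) * φ x = 1 := by
      rw [← hN]; exact Finset.sum_congr rfl fun x _ => by ring
    rw [h', sumM (fun x => (starRingEnd ℂ) (φ x)), h'', mul_one]
  have S3 : ∑ e, φ (o e) * (starRingEnd ℂ) (φ (t e)) = ((q : ℂ) + 1) * (lam : ℂ) := by
    rw [swap (fun e => φ (o e) * (starRingEnd ℂ) (φ (t e)))]
    simp only [hto, hor]
    rw [← S2]
  -- expand and conclude
  have expand : ∑ e, (φ (t e) - ε₁ * φ (o e)) *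
      (starRingEnd ℂ) (φ (t e) - m * φ (o e))
      = (∑ e, φ (t e) * (starRingEnd ℂ) (φ (t e)))
        - (starRingEnd ℂ) m * (∑ e, φ (t e) * (starRingEnd ℂ) (φ (o e)))
        - ε₁ * (∑ e, φ (o e) * (starRingEnd ℂ) (φ (t e)))
        + ε₁ * (starRingEnd ℂ) m * (∑ e, φ (o e) * (starRingEnd ℂ) (φ (o e))) := by
    simp only [map_sub, map_mul, Finset.mul_sum, ← Finset.sum_sub_distrib,
      ← Finset.sum_add_distrib]
    exact Finset.sum_congr rfl fun e _ => by ring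
  rw [expand, S1, S2, S3, S4, hcm]
  field_simp
  ring
end
end

section
/- Let q ≥ 2 and let G = (V,E) be a finite connected (q+1)-regular graph whose normalized adjacency operator A has spectrum contained in {1} ∪ [−1+β, 1−β] for some β ∈ (0,1). Then every eigenvalue z ≠ 1 of the non-backtracking matrix M♯ satisfies |z| ≤ max{ 1/√q , ((q+1)(1−β) + √(max(0, (q+1)²(1−β)² − 4q)))/(2q) }, and this bound is strictly less than 1; moreover 1 is a simple eigenvalue of M♯, with constant eigenvector. -/
open Finset

noncomputable section

set_option linter.unusedSectionVars false
set_option linter.unusedVariables false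
set_option maxHeartbeats 1000000

section Aux

variable {q : ℕ} {B V : Type} [Fintype B] [Fintype V] [DecidableEq B] [DecidableEq V]
variable {o t : B → V} {rev : B → B}

/-- vertex sum of a bond function -/
def Fv (o : B → V) (f : B → ℂ) (x : V) : ℂ :=
  ∑ e ∈ univ.filter (fun e => o e = x), f e

lemma my_sum_t {M : Type} [AddCommMonoid M]
    (hinv : Function.Involutive rev) (horev : ∀ e, o (rev e) = t e)
    (x : V) (g : B → M) :
    ∑ e ∈ univ.filter (fun e => t e = x), g e
      = ∑ e ∈ univ.filter (fun e => o e = x), g (rev e) := by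
  have ht : ∀ e, t (rev e) = o e := fun e => by
    have h := horev (rev e); rw [hinv e] at h; exact h.symm
  refine Finset.sum_nbij' (fun e => rev e) (fun e => rev e) ?_ ?_ ?_ ?_ ?_
  · intro e he; simp only [mem_filter, mem_univ, true_and] at he ⊢
    rw [horev, he]
  · intro e he; simp only [mem_filter, mem_univ, true_and] at he ⊢
    rw [ht, he]
  · intro e _; exact hinv e
  · intro e _; exact hinv e
  · intro e _; rw [hinv e]

lemma adjB_mulVec (F : V → ℂ) (x : V) :
    (adjB q o t).mulVec F x
      = ((q : ℂ) + 1)⁻¹ * ∑ e ∈ univ.filter (fun e => o e = x), F (t e) := by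
  have h1 : ∑ e ∈ univ.filter (fun e => o e = x), F (t e)
      = ∑ y : V, ((univ.filter (fun e => o e = x ∧ t e = y)).card : ℂ) * F y := by
    rw [← Finset.sum_fiberwise (univ.filter (fun e => o e = x)) t (fun e => F (t e))]
    refine Finset.sum_congr rfl fun y _ => ?_
    rw [Finset.filter_filter]
    calc ∑ e ∈ (univ.filter fun e => o e = x ∧ t e = y), F (t e)
        = ∑ e ∈ (univ.filter fun e => o e = x ∧ t e = y), F y := by
          refine Finset.sum_congr rfl fun e he => ?_
          simp only [mem_filter] at he
          rw [he.2.2]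
      _ = _ := by rw [Finset.sum_const, nsmul_eq_mul]
  simp only [Matrix.mulVec, dotProduct, adjB]
  rw [h1, Finset.mul_sum]
  refine Finset.sum_congr rfl fun y _ => ?_
  ring

lemma nbMat_mulVec (hinv : Function.Involutive rev) (horev : ∀ e, o (rev e) = t e)
    (f : B → ℂ) (e : B) :
    (nbMat q o t rev).mulVec f e
      = (q : ℂ)⁻¹ * ((∑ e' ∈ univ.filter (fun e' => o e' = t e), f e') - f (rev e)) := by
  have hmem : rev e ∈ univ.filter (fun e' => o e' = t e) := by
    simp [horev e]
  have hfe : univ.filter (fun e' => o e' = t e ∧ e' ≠ rev e)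
      = (univ.filter (fun e' => o e' = t e)).erase (rev e) := by
    ext e'; simp [Finset.mem_erase, and_comm]
  have hstep : ∀ e' : B, (if o e' = t e ∧ e' ≠ rev e then (q:ℂ)⁻¹ else 0) * f e'
      = if o e' = t e ∧ e' ≠ rev e then (q:ℂ)⁻¹ * f e' else 0 := fun e' => by
    split <;> simp
  simp only [Matrix.mulVec, dotProduct, nbMat, hstep]
  rw [← Finset.sum_filter, hfe, ← Finset.mul_sum,
    Finset.sum_erase_eq_sub hmem]

end Aux

section Perron

variable {q : ℕ} {B V : Type} [Fintype B] [Fintype V] [DecidableEq B] [DecidableEq V]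
variable {o t : B → V}

lemma const_of_eig_one [Nonempty V]
    (hdeg : ∀ x : V, (univ.filter fun e => o e = x).card = q + 1)
    (hconn : ∀ x y : V, Relation.ReflTransGen (fun u v => ∃ e, o e = u ∧ t e = v) x y)
    {F : V → ℂ} (hF : (adjB q o t).mulVec F = F) : ∀ x y : V, F x = F y := by
  obtain ⟨x₀, -, hx₀⟩ := Finset.exists_max_image (univ : Finset V)
    (fun v => ‖F v‖) ⟨Classical.arbitrary V, mem_univ _⟩
  have hmax : ∀ w, ‖F w‖ ≤ ‖F x₀‖ := fun w => hx₀ w (mem_univ w)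
  have key : ∀ u, ‖F u‖ = ‖F x₀‖ →
      ∀ e, o e = u → F (t e) = F u := by
    intro u habs e he
    have hmaxu : ∀ w, ‖F w‖ ≤ ‖F u‖ := fun w => habs ▸ hmax w
    have hq1 : ((q : ℂ) + 1) ≠ 0 := by
      have h : ((q : ℂ) + 1) = ((q + 1 : ℕ) : ℂ) := by push_cast; ring
      rw [h]; exact_mod_cast Nat.succ_ne_zero q
    have hsum : ∑ e' ∈ univ.filter (fun e' => o e' = u), F (t e')
        = ((q : ℂ) + 1) * F u := by
      have h1 := congrFun hF u
      rw [adjB_mulVec] at h1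
      rw [inv_mul_eq_iff_eq_mul₀ hq1] at h1
      exact h1
    set c := (starRingEnd ℂ) (F u) with hc
    have hzero : ∑ e' ∈ univ.filter (fun e' => o e' = u), (c * (F u - F (t e'))).re = 0 := by
      have h2 : ∑ e' ∈ univ.filter (fun e' => o e' = u), (c * (F u - F (t e')))
          = c * (((q:ℂ)+1) * F u - ∑ e' ∈ univ.filter (fun e' => o e' = u), F (t e')) := by
        rw [← Finset.mul_sum, Finset.sum_sub_distrib, Finset.sum_const, hdeg u]
        push_cast
        ring
      have h3 : ∑ e' ∈ univ.filter (fun e' => o e' = u), (c * (F u - F (t e'))) = 0 := by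
        rw [h2, hsum]; ring
      calc ∑ e' ∈ univ.filter (fun e' => o e' = u), (c * (F u - F (t e'))).re
          = (∑ e' ∈ univ.filter (fun e' => o e' = u), (c * (F u - F (t e')))).re := by
            rw [Complex.re_sum]
        _ = 0 := by rw [h3]; rfl
    have hnn : ∀ e' ∈ univ.filter (fun e' => o e' = u), 0 ≤ (c * (F u - F (t e'))).re := by
      intro e' _
      have h2 : (c * F (t e')).re ≤ ‖F u‖ * ‖F u‖ := by
        calc (c * F (t e')).re ≤ ‖c * F (t e')‖ := Complex.re_le_norm _
          _ = ‖F u‖ * ‖F (t e')‖ := by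
              rw [norm_mul, hc, Complex.norm_conj]
          _ ≤ ‖F u‖ * ‖F u‖ := by
              exact mul_le_mul_of_nonneg_left (hmaxu _) (norm_nonneg _)
      have h3 : (c * F u).re = ‖F u‖ * ‖F u‖ := by
        rw [hc, Complex.conj_mul']
        simp [← Complex.ofReal_pow, sq]
      rw [mul_sub, Complex.sub_re]
      linarith
    have hall := (Finset.sum_eq_zero_iff_of_nonneg hnn).mp hzero
    have hre : (c * (F u - F (t e))).re = 0 := hall e (by simp [he])
    have habse : ‖F (t e)‖ ≤ ‖F u‖ := hmaxu _
    have hfin : Complex.normSq (F (t e) - F u) ≤ 0 := by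
      have expand : Complex.normSq (F (t e) - F u)
          = Complex.normSq (F (t e)) - 2 * (c * F (t e)).re + Complex.normSq (F u) := by
        simp only [hc, Complex.normSq_apply, Complex.mul_re, Complex.sub_re, Complex.sub_im,
          Complex.conj_re, Complex.conj_im]
        ring
      have h4 : (c * F (t e)).re = Complex.normSq (F u) := by
        have h5 : (c * F u).re = Complex.normSq (F u) := by
          rw [hc, Complex.conj_mul']
          simp [← Complex.ofReal_pow, Complex.sq_norm]
        rw [mul_sub, Complex.sub_re] at hre
        linarith
      have h6 : Complex.normSq (F (t e)) ≤ Complex.normSq (F u) := by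
        rw [← Complex.sq_norm, ← Complex.sq_norm]
        exact pow_le_pow_left₀ (norm_nonneg _) habse 2
      linarith
    have := Complex.normSq_eq_zero.mp (le_antisymm hfin (Complex.normSq_nonneg _))
    exact sub_eq_zero.mp this
  have main : ∀ y, F y = F x₀ := by
    intro y
    induction hconn x₀ y with
    | refl => rfl
    | tail hxy step ih =>
        obtain ⟨e, heo, het⟩ := step
        rw [← het, key _ (by rw [ih]) e heo, ih]
  intro x y; rw [main x, main y]

end Perron

/-- Spectral localization of the non-backtracking matrix of an expander
(Anantharaman–Le Masson, §7.1): every eigenvalue `z ≠ 1` of `M♯` satisfies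
`|z| ≤ max{1/√q, ((q+1)(1−β) + √((q+1)²(1−β)² − 4q)⁺)/(2q)} < 1`, and `1` is a simple
eigenvalue with constant eigenvector. -/
theorem nbMat_spectral_gap
    (q : ℕ) (hq : 2 ≤ q) {B V : Type} [Fintype B] [Fintype V] [DecidableEq B] [DecidableEq V]
    [Nonempty V]
    (o t : B → V) (rev : B → B) (hG : IsBondGraph q o t rev)
    (hconn : ∀ x y : V, Relation.ReflTransGen (fun u v => ∃ e, o e = u ∧ t e = v) x y)
    (β : ℝ) (hβ0 : 0 < β) (hβ1 : β < 1)
    (hspec : ∀ μ : ℂ, (∃ φ : V → ℂ, φ ≠ 0 ∧ (adjB q o t).mulVec φ = μ • φ) →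
      μ = 1 ∨ (μ.im = 0 ∧ -1 + β ≤ μ.re ∧ μ.re ≤ 1 - β)) :
    (∀ z : ℂ, z ≠ 1 → (∃ f : B → ℂ, f ≠ 0 ∧ (nbMat q o t rev).mulVec f = z • f) →
      ‖z‖ ≤ max (1 / Real.sqrt q)
        ((((q : ℝ) + 1) * (1 - β) +
            Real.sqrt (max 0 (((q : ℝ) + 1) ^ 2 * (1 - β) ^ 2 - 4 * q))) / (2 * q))) ∧
    max (1 / Real.sqrt q)
        ((((q : ℝ) + 1) * (1 - β) +
            Real.sqrt (max 0 (((q : ℝ) + 1) ^ 2 * (1 - β) ^ 2 - 4 * q))) / (2 * q)) < 1 ∧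
    Module.finrank ℂ
        ↥(LinearMap.ker ((nbMat q o t rev).mulVecLin - LinearMap.id)) = 1 ∧
    (nbMat q o t rev).mulVec (fun _ => (1 : ℂ)) = fun _ => 1 := by
  obtain ⟨hinv, hne, horev, hdeg⟩ := hG
  have hq2 : (2:ℝ) ≤ (q:ℝ) := by exact_mod_cast hq
  have hqR : (0:ℝ) < (q:ℝ) := by linarith
  have hqC : (q:ℂ) ≠ 0 := Nat.cast_ne_zero.mpr (by omega)
  have hq1C : ((q:ℂ) + 1) ≠ 0 := by
    have h : ((q : ℂ) + 1) = ((q + 1 : ℕ) : ℂ) := by push_cast; ring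
    rw [h]; exact_mod_cast Nat.succ_ne_zero q
  have ht' : ∀ e, t (rev e) = o e := fun e => by
    have h := horev (rev e); rw [hinv e] at h; exact h.symm
  have hdegt : ∀ x : V, (univ.filter fun e => t e = x).card = q + 1 := by
    intro x
    have h := my_sum_t (M := ℕ) hinv horev x (fun _ => 1)
    simp only [Finset.sum_const, smul_eq_mul, mul_one] at h
    rw [h, hdeg]
  -- key eigen identities
  have I1 : ∀ (f : B → ℂ) (z : ℂ), (nbMat q o t rev).mulVec f = z • f →
      ∀ e, Fv o f (t e) - f (rev e) = (q:ℂ) * z * f e := by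
    intro f z hf e
    have h := congrFun hf e
    rw [nbMat_mulVec hinv horev] at h
    simp only [Pi.smul_apply, smul_eq_mul] at h
    field_simp [Fv] at h ⊢
    unfold Fv
    linear_combination h
  have I2 : ∀ (f : B → ℂ) (z : ℂ), (nbMat q o t rev).mulVec f = z • f → ∀ x : V,
      ((q:ℂ) + 1) * ((adjB q o t).mulVec (Fv o f) x)
        = (q:ℂ) * z * Fv o f x + Fv t f x := by
    intro f z hf x
    have h := Finset.sum_congr rfl
      (fun e (_ : e ∈ univ.filter fun e => o e = x) => I1 f z hf e)
    rw [Finset.sum_sub_distrib, ← Finset.mul_sum,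
      ← my_sum_t hinv horev x f] at h
    have h2 := adjB_mulVec (q := q) (o := o) (t := t) (Fv o f) x
    rw [h2, mul_inv_cancel_left₀ hq1C]
    have : Fv o f x = ∑ e ∈ univ.filter (fun e => o e = x), f e := rfl
    have ht2 : Fv t f x = ∑ e ∈ univ.filter (fun e => t e = x), f e := rfl
    rw [this, ht2]
    linear_combination h
  have I3 : ∀ (f : B → ℂ) (z : ℂ), (nbMat q o t rev).mulVec f = z • f → ∀ x : V,
      Fv o f x = z * Fv t f x := by
    intro f z hf x
    have h := Finset.sum_congr rfl
      (fun e (_ : e ∈ univ.filter fun e => t e = x) => I1 f z hf e)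
    rw [Finset.sum_sub_distrib, ← Finset.mul_sum] at h
    have ha : ∑ e ∈ univ.filter (fun e => t e = x), Fv o f (t e)
        = ((q:ℂ) + 1) * Fv o f x := by
      calc ∑ e ∈ univ.filter (fun e => t e = x), Fv o f (t e)
          = ∑ e ∈ univ.filter (fun e => t e = x), Fv o f x := by
            refine Finset.sum_congr rfl fun e he => ?_
            simp only [mem_filter, mem_univ, true_and] at he
            rw [he]
        _ = _ := by rw [Finset.sum_const, hdegt x, nsmul_eq_mul]; push_cast; ring
    have hb : ∑ e ∈ univ.filter (fun e => t e = x), f (rev e)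
        = Fv o f x := by
      rw [my_sum_t hinv horev x (fun e => f (rev e))]
      refine Finset.sum_congr rfl fun e _ => ?_
      rw [hinv e]
    rw [ha, hb] at h
    -- h : (q+1) F x - F x = q * z * G x
    apply mul_left_cancel₀ hqC
    have ht2 : Fv t f x = ∑ e ∈ univ.filter (fun e => t e = x), f e := rfl
    rw [ht2]
    linear_combination h
  have I4 : ∀ (f : B → ℂ) (z : ℂ), (nbMat q o t rev).mulVec f = z • f → ∀ e,
      ((q:ℂ)^2 * z^2 - 1) * f e = (q:ℂ) * z * Fv o f (t e) - Fv o f (o e) := by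
    intro f z hf e
    have h1 := I1 f z hf e
    have h2 := I1 f z hf (rev e)
    rw [hinv e, ht' e] at h2
    linear_combination (-(q:ℂ) * z) * h1 + h2
  -- positivity of bound, and 1/q ≤ 1/√q
  have hsqrtq : Real.sqrt (q:ℝ) ≤ (q:ℝ) := by
    have h := Real.sqrt_le_sqrt (by nlinarith : (q:ℝ) ≤ (q:ℝ)^2)
    rwa [Real.sqrt_sq hqR.le] at h
  have hsqrtq0 : 0 < Real.sqrt (q:ℝ) := Real.sqrt_pos.mpr hqR
  have hq_inv_le : 1 / (q:ℝ) ≤ 1 / Real.sqrt (q:ℝ) :=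
    one_div_le_one_div_of_le hsqrtq0 hsqrtq
  have RHSpos : 0 < max (1 / Real.sqrt (q:ℝ))
      ((((q : ℝ) + 1) * (1 - β) +
        Real.sqrt (max 0 (((q : ℝ) + 1) ^ 2 * (1 - β) ^ 2 - 4 * q))) / (2 * q)) :=
    lt_of_lt_of_le (by positivity) (le_max_left _ _)
  refine ⟨?_, ?_, ?_, ?_⟩
  · -- main eigenvalue bound
    rintro z hz1 ⟨f, hf0, hf⟩
    by_cases hz0 : z = 0
    · rw [hz0]; simpa using RHSpos.le
    by_cases hF0 : Fv o f = 0
    · -- q² z² = 1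
      obtain ⟨e, hfe⟩ := Function.ne_iff.mp hf0
      have h4 := I4 f z hf e
      have hz1' : Fv o f (t e) = 0 := by rw [hF0]; rfl
      have hz2' : Fv o f (o e) = 0 := by rw [hF0]; rfl
      rw [hz1', hz2'] at h4
      have h5 : ((q:ℂ)^2 * z^2 - 1) * f e = 0 := by rw [h4]; ring
      have h6 : (q:ℂ)^2 * z^2 = 1 := by
        rcases mul_eq_zero.mp h5 with h | h
        · linear_combination h
        · exact absurd h hfe
      have h7 : ((q:ℝ) * ‖z‖)^2 = 1 := by
        have := congrArg norm h6
        rw [norm_mul, norm_pow, norm_pow, Complex.norm_natCast, norm_one] at this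
        rw [mul_pow]; exact this
      have h8 : ‖z‖ = 1 / (q:ℝ) := by
        have hnn : 0 ≤ (q:ℝ) * ‖z‖ := by positivity
        have : (q:ℝ) * ‖z‖ = 1 := by nlinarith
        field_simp
        linarith [this]
      rw [h8]
      exact le_trans hq_inv_le (le_max_left _ _)
    · -- A-eigenvector case
      set μ : ℂ := ((q:ℂ) * z^2 + 1) / (((q:ℂ) + 1) * z) with hμdef
      have hz' : ((q:ℂ) + 1) * z ≠ 0 := mul_ne_zero hq1C hz0
      have heig : (adjB q o t).mulVec (Fv o f) = μ • Fv o f := by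
        funext x
        have h2 := I2 f z hf x
        have h3 := I3 f z hf x
        simp only [Pi.smul_apply, smul_eq_mul]
        apply mul_left_cancel₀ hz'
        have hrhs : (((q:ℂ)+1)*z) * (μ * Fv o f x) = ((q:ℂ)*z^2+1) * Fv o f x := by
          calc (((q:ℂ)+1)*z) * (μ * Fv o f x) = (μ * (((q:ℂ)+1)*z)) * Fv o f x := by ring
            _ = _ := by rw [hμdef, div_mul_cancel₀ _ hz']
        rw [hrhs]
        linear_combination z * h2 - h3
      have hquadμ : (q:ℂ) * z^2 + 1 = μ * (((q:ℂ) + 1) * z) := by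
        rw [hμdef, div_mul_cancel₀ _ hz']
      rcases hspec μ ⟨Fv o f, hF0, heig⟩ with hμ1 | ⟨hμim, hμlo, hμhi⟩
      · -- μ = 1
        have hquad : (q:ℂ) * z^2 + 1 = ((q:ℂ) + 1) * z := by
          rw [hquadμ, hμ1, one_mul]
        have hfac : (z - 1) * ((q:ℂ) * z - 1) = 0 := by linear_combination hquad
        rcases mul_eq_zero.mp hfac with h | h
        · exact absurd (by linear_combination h) hz1
        · have hzq : z = ((q:ℝ):ℂ)⁻¹ := by
            rw [Complex.ofReal_natCast]
            field_simp
            linear_combination h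
          rw [hzq, norm_inv, Complex.norm_real, Real.norm_eq_abs, abs_of_pos hqR, ← one_div]
          exact le_trans hq_inv_le (le_max_left _ _)
      · -- μ real
        set m : ℝ := ((q:ℝ) + 1) * μ.re with hmdef
        have hμre : μ = (μ.re : ℂ) := Complex.ext rfl (by simp [hμim])
        have hquad : (q:ℂ) * z^2 + 1 = (m:ℂ) * z := by
          rw [hquadμ, hμre]; push_cast [hmdef]; ring
        by_cases him : z.im = 0
        · -- z real
          have hzre : z = (z.re : ℂ) := Complex.ext rfl (by simp [him])
          set r := z.re with hr
          have hreq : (q:ℝ) * r^2 + 1 = m * r := by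
            have h := hquad
            rw [hzre] at h
            exact_mod_cast h
          have hr0 : r ≠ 0 := by
            intro h0
            rw [h0] at hreq
            simp at hreq
          set s := |r| with hs
          have hs0 : 0 < s := abs_pos.mpr hr0
          have hms : |m| * s = (q:ℝ) * s^2 + 1 := by
            have h1 : |m * r| = |(q:ℝ) * r^2 + 1| := by rw [hreq]
            rw [abs_mul, abs_of_pos (by positivity : (0:ℝ) < (q:ℝ) * r^2 + 1)] at h1
            rw [hs, h1, sq_abs]
          have hma : |m| ≤ ((q:ℝ) + 1) * (1 - β) := by
            rw [hmdef, abs_mul, abs_of_pos (by linarith : (0:ℝ) < (q:ℝ)+1)]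
            have : |μ.re| ≤ 1 - β := abs_le.mpr ⟨by linarith, hμhi⟩
            nlinarith
          set a : ℝ := ((q:ℝ) + 1) * (1 - β) with ha
          have hineq : (q:ℝ) * s^2 - a * s + 1 ≤ 0 := by nlinarith
          have hsq : (2*(q:ℝ)*s - a)^2 ≤ a^2 - 4*(q:ℝ) := by nlinarith
          have haa : ((q:ℝ) + 1)^2 * (1 - β)^2 = a^2 := by rw [ha]; ring
          have hmax0 : max 0 (((q:ℝ) + 1)^2 * (1 - β)^2 - 4 * q) = a^2 - 4*(q:ℝ) := by
            rw [max_eq_right]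
            · rw [haa]
            · rw [haa]; nlinarith [sq_nonneg (2*(q:ℝ)*s - a)]
          have hsqrt : 2*(q:ℝ)*s - a ≤ Real.sqrt (max 0 (((q:ℝ) + 1)^2 * (1 - β)^2 - 4 * q)) := by
            rw [hmax0]
            calc 2*(q:ℝ)*s - a ≤ |2*(q:ℝ)*s - a| := le_abs_self _
              _ = Real.sqrt ((2*(q:ℝ)*s - a)^2) := (Real.sqrt_sq_eq_abs _).symm
              _ ≤ Real.sqrt (a^2 - 4*(q:ℝ)) := Real.sqrt_le_sqrt hsq
          have hfin : s ≤ (a + Real.sqrt (max 0 (((q:ℝ) + 1)^2 * (1 - β)^2 - 4 * q))) / (2 * q) := by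
            rw [le_div_iff₀ (by positivity)]
            linarith
          have habsz : ‖z‖ = s := by
            rw [hzre, Complex.norm_real, Real.norm_eq_abs]
          rw [habsz]
          exact le_trans hfin (le_max_right _ _)
        · -- z non-real : |z| = 1/√q
          have hconjquad : (q:ℂ) * ((starRingEnd ℂ) z)^2 + 1 = (m:ℂ) * (starRingEnd ℂ) z := by
            have h := congrArg (starRingEnd ℂ) hquad
            simpa [map_mul, map_add, map_pow, Complex.conj_ofReal] using h
          have hzne : z - (starRingEnd ℂ) z ≠ 0 := by
            refine sub_ne_zero.mpr fun h => him ?_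
            exact (Complex.conj_eq_iff_im.mp h.symm)
          have hsum : (q:ℂ) * (z + (starRingEnd ℂ) z) = (m:ℂ) := by
            apply mul_right_cancel₀ hzne
            linear_combination hquad - hconjquad
          have hprod : (q:ℂ) * (z * (starRingEnd ℂ) z) = 1 := by
            linear_combination z * hsum - hquad
          have habs2 : (‖z‖)^2 = 1/(q:ℝ) := by
            rw [Complex.sq_norm]
            have h := hprod
            rw [Complex.mul_conj] at h
            have h2 : (q:ℝ) * Complex.normSq z = 1 := by exact_mod_cast h
            field_simp
            linarith
          have : ‖z‖ = 1 / Real.sqrt (q:ℝ) := by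
            rw [← Real.sqrt_sq (norm_nonneg z), habs2, one_div, one_div,
              Real.sqrt_inv]
          rw [this]
          exact le_max_left _ _
  · -- the bound is < 1
    apply max_lt
    · rw [div_lt_one hsqrtq0]
      have h := Real.sqrt_lt_sqrt (by norm_num : (0:ℝ) ≤ 1) (by linarith : (1:ℝ) < (q:ℝ))
      simpa using h
    · set a : ℝ := ((q:ℝ) + 1) * (1 - β) with ha
      have ha0 : 0 < a := mul_pos (by linarith) (by linarith)
      have ha2 : a < 2*(q:ℝ) := by nlinarith
      have hD : max 0 (((q:ℝ) + 1)^2 * (1 - β)^2 - 4*(q:ℝ)) < (2*(q:ℝ) - a)^2 := by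
        apply max_lt
        · exact pow_pos (by linarith) 2
        · rw [ha]
          nlinarith [mul_pos hqR (mul_pos (show (0:ℝ) < (q:ℝ)+1 by linarith) hβ0)]
      have hs : Real.sqrt (max 0 (((q:ℝ) + 1)^2 * (1 - β)^2 - 4*(q:ℝ))) < 2*(q:ℝ) - a := by
        have h := Real.sqrt_lt_sqrt (le_max_left 0 _) hD
        rwa [Real.sqrt_sq (by linarith)] at h
      rw [div_lt_one (by positivity)]
      linarith
  · -- simplicity of eigenvalue 1
    have hBne : Nonempty B := by
      have h := hdeg (Classical.arbitrary V)
      have h2 : (univ.filter fun e => o e = Classical.arbitrary V).Nonempty :=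
        Finset.card_pos.mp (by rw [h]; omega)
      exact ⟨h2.choose⟩
    have hconst_ne : (fun _ : B => (1:ℂ)) ≠ 0 := by
      intro h
      exact one_ne_zero (congrFun h (Classical.arbitrary B))
    have hq1' : (q:ℂ) - 1 ≠ 0 := by
      intro h
      have h2 : (q:ℂ) = ((1:ℕ):ℂ) := by push_cast; linear_combination h
      have := Nat.cast_inj (R := ℂ).mp h2
      omega
    have hker : LinearMap.ker ((nbMat q o t rev).mulVecLin - LinearMap.id)
        = Submodule.span ℂ {fun _ : B => (1:ℂ)} := by
      apply le_antisymm
      · intro f hfk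
        have hf : (nbMat q o t rev).mulVec f = (1:ℂ) • f := by
          have h := LinearMap.mem_ker.mp hfk
          rw [LinearMap.sub_apply, LinearMap.id_apply, sub_eq_zero,
            Matrix.mulVecLin_apply] at h
          rw [h, one_smul]
        rw [Submodule.mem_span_singleton]
        by_cases hF0 : Fv o f = 0
        · refine ⟨0, ?_⟩
          rw [zero_smul]
          funext e
          have h4 := I4 f 1 hf e
          have hz1' : Fv o f (t e) = 0 := by rw [hF0]; rfl
          have hz2' : Fv o f (o e) = 0 := by rw [hF0]; rfl
          rw [hz1', hz2'] at h4
          have h5 : ((q:ℂ)^2 * 1^2 - 1) * f e = 0 := by rw [h4]; ring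
          have hne1 : (q:ℂ)^2 * 1^2 - 1 ≠ 0 := by
            intro h
            have : ((q:ℂ) - 1) * ((q:ℂ) + 1) = 0 := by linear_combination h
            rcases mul_eq_zero.mp this with h' | h'
            · exact hq1' h'
            · exact hq1C h'
          have := (mul_eq_zero.mp h5).resolve_left hne1
          simpa using this.symm
        · have hAF : (adjB q o t).mulVec (Fv o f) = Fv o f := by
            funext x
            have h2 := I2 f 1 hf x
            have h3 := I3 f 1 hf x
            apply mul_left_cancel₀ hq1C
            rw [one_mul] at h3
            rw [h2, h3]
            ring
          have hc : ∀ x y : V, Fv o f x = Fv o f y := const_of_eig_one hdeg hconn hAF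
          set x₀ := Classical.arbitrary V with hx₀
          refine ⟨Fv o f x₀ / ((q:ℂ) + 1), ?_⟩
          funext e
          have h4 := I4 f 1 hf e
          rw [hc (t e) x₀, hc (o e) x₀] at h4
          simp only [Pi.smul_apply, smul_eq_mul, mul_one]
          have hfac : ((q:ℂ) - 1) * (((q:ℂ) + 1) * f e - Fv o f x₀) = 0 := by
            linear_combination h4
          have h5 := (mul_eq_zero.mp hfac).resolve_left hq1'
          field_simp
          linear_combination -h5
      · rw [Submodule.span_le, Set.singleton_subset_iff, SetLike.mem_coe,
          LinearMap.mem_ker, LinearMap.sub_apply, LinearMap.id_apply,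
          Matrix.mulVecLin_apply, sub_eq_zero]
        funext e
        rw [nbMat_mulVec hinv horev, Finset.sum_const, hdeg, nsmul_eq_mul]
        push_cast
        field_simp
        ring
    rw [hker]
    exact finrank_span_singleton hconst_ne
  · -- constant eigenvector
    funext e
    rw [nbMat_mulVec hinv horev, Finset.sum_const, hdeg, nsmul_eq_mul]
    push_cast
    field_simp
    ring
end
end
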